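/- arXiv:2603.17983 — 12 statements merged into one kernel-verified Lean document; each statement's English description precedes it below -/
import Mathlib

section
/- Let (c_n)_{n≥1} ⊆ (0,1) with associated RWPS (P_n)_{n≥0} and switched RWPS (P̃_n)_{n≥0}. Then the following are equivalent: (a) both (P_n) and (P̃_n) satisfy nonnegative linearization of products, sup_{n≥0} |P_n(0)| < ∞, and sup_{n≥0} |P̃_n(0)| < ∞; (b) c_n = 1/2 for all n ≥ 1 (i.e., (P_n) is the Chebyshev sequence of the first kind). -/
open Polynomial

/-- `Q` satisfies nonnegative linearization of products. -/
def NonnegLin (Q : ℕ → Polynomial ℝ) : Prop :=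
  ∀ m n : ℕ, ∃ g : ℕ → ℝ,
    (∀ k, k ≤ m + n → 0 ≤ g k) ∧
    Q m * Q n = ∑ k ∈ Finset.range (m + n + 1), C (g k) * Q k

/-- `P` is the random walk polynomial sequence associated with `c` (with `a n = 1 - c n`). -/
def IsRWPS (c : ℕ → ℝ) (P : ℕ → Polynomial ℝ) : Prop :=
  P 0 = 1 ∧ P 1 = X ∧
  ∀ n, 1 ≤ n → X * P n = C (1 - c n) * P (n + 1) + C (c n) * P (n - 1)

/-- `P` is the switched random walk polynomial sequence associated with `c`
(the roles of `a n = 1 - c n` and `c n` are interchanged). -/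
def IsSwitchedRWPS (c : ℕ → ℝ) (P : ℕ → Polynomial ℝ) : Prop :=
  P 0 = 1 ∧ P 1 = X ∧
  ∀ n, 1 ≤ n → X * P n = C (c n) * P (n + 1) + C (1 - c n) * P (n - 1)

section Aux
variable {γ : ℕ → ℝ} {Q : ℕ → Polynomial ℝ}

lemma rwps_eval_one (hγ : ∀ n, 1 ≤ n → γ n ∈ Set.Ioo (0:ℝ) 1) (hQ : IsRWPS γ Q) :
    ∀ n, (Q n).eval 1 = 1 := by
  obtain ⟨h0, h1, hrec⟩ := hQ
  have key : ∀ n, (Q n).eval 1 = 1 ∧ (Q (n+1)).eval 1 = 1 := by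
    intro n
    induction n with
    | zero => constructor <;> simp [h0, h1]
    | succ n ih =>
      refine ⟨ih.2, ?_⟩
      have h := hrec (n+1) (by omega)
      have he := congrArg (eval 1) h
      simp only [eval_mul, eval_add, eval_C, eval_X, Nat.add_sub_cancel] at he
      have hγn := hγ (n+1) (by omega)
      rw [ih.1, ih.2] at he
      have : (1 - γ (n+1)) * (Q (n+1+1)).eval 1 = 1 - γ (n+1) := by linarith
      have hne : (1 - γ (n+1)) ≠ 0 := by
        have := hγn.2; intro hz; nlinarith
      exact mul_left_cancel₀ hne (by rw [this, mul_one])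
  exact fun n => (key n).1

lemma rwps_deg (hγ : ∀ n, 1 ≤ n → γ n ∈ Set.Ioo (0:ℝ) 1) (hQ : IsRWPS γ Q) :
    ∀ n, (Q n).natDegree ≤ n ∧ 0 < (Q n).coeff n := by
  obtain ⟨h0, h1, hrec⟩ := hQ
  have key : ∀ n, ((Q n).natDegree ≤ n ∧ 0 < (Q n).coeff n) ∧
      ((Q (n+1)).natDegree ≤ n+1 ∧ 0 < (Q (n+1)).coeff (n+1)) := by
    intro n
    induction n with
    | zero =>
      refine ⟨⟨?_, ?_⟩, ?_, ?_⟩ <;> simp [h0, h1]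
    | succ n ih =>
      refine ⟨ih.2, ?_, ?_⟩
      · have h := hrec (n+1) (by omega)
        have hγn := hγ (n+1) (by omega)
        have hne : (1 - γ (n+1)) ≠ 0 := by have := hγn.2; intro hz; nlinarith
        have heq : C (1 - γ (n+1)) * Q (n+2) = X * Q (n+1) - C (γ (n+1)) * Q n := by
          rw [h]; simp only [Nat.add_sub_cancel]; ring
        have hd : (C (1 - γ (n+1)) * Q (n+2)).natDegree ≤ n + 2 := by
          rw [heq]
          refine le_trans (natDegree_sub_le _ _) ?_
          simp only [max_le_iff]
          constructor
          · refine le_trans (natDegree_mul_le) ?_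
            have := ih.2.1; simp [natDegree_X]; omega
          · refine le_trans (natDegree_mul_le) ?_
            have := ih.1.1; simp [natDegree_C]; omega
        rw [natDegree_C_mul hne] at hd
        exact hd
      · have h := hrec (n+1) (by omega)
        have hγn := hγ (n+1) (by omega)
        have hne : (0:ℝ) < 1 - γ (n+1) := by have := hγn.2; linarith
        have heq : C (1 - γ (n+1)) * Q (n+2) = X * Q (n+1) - C (γ (n+1)) * Q n := by
          rw [h]; simp only [Nat.add_sub_cancel]; ring
        have hco := congrArg (fun p => p.coeff (n+2)) heq
        simp only [coeff_C_mul, coeff_sub, coeff_X_mul] at hco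
        have hz : (Q n).coeff (n+2) = 0 :=
          coeff_eq_zero_of_natDegree_lt (by have := ih.1.1; omega)
        have hpos := ih.2.2
        nlinarith [hco, hz]
  exact fun n => (key n).1

lemma indep_expansion (hd : ∀ k, (Q k).natDegree ≤ k) (hc : ∀ k, (Q k).coeff k ≠ 0) :
    ∀ N (d : ℕ → ℝ), ∑ k ∈ Finset.range N, C (d k) * Q k = 0 → ∀ k < N, d k = 0 := by
  intro N
  induction N with
  | zero => intro d _ k hk; omega
  | succ N ih =>
    intro d hsum k hk
    rw [Finset.sum_range_succ] at hsum
    have hcoN : d N = 0 := by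
      have := congrArg (fun p => p.coeff N) hsum
      simp only [coeff_add, coeff_C_mul, coeff_zero] at this
      rw [finset_sum_coeff] at this
      have hz : ∀ j ∈ Finset.range N, (C (d j) * Q j).coeff N = 0 := by
        intro j hj
        rw [coeff_C_mul, coeff_eq_zero_of_natDegree_lt
          (lt_of_le_of_lt (hd j) (Finset.mem_range.mp hj)), mul_zero]
      rw [Finset.sum_eq_zero hz, zero_add] at this
      exact (mul_eq_zero.mp this).resolve_right (hc N)
    rcases Nat.lt_succ_iff_lt_or_eq.mp hk with h | h
    · refine ih d ?_ k h
      rw [hcoN] at hsum; simpa using hsum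
    · exact h ▸ hcoN

lemma lin_sum_one (h1 : ∀ n, (Q n).eval 1 = 1) {m n : ℕ} {g : ℕ → ℝ}
    (hg : Q m * Q n = ∑ k ∈ Finset.range (m+n+1), C (g k) * Q k) :
    ∑ k ∈ Finset.range (m+n+1), g k = 1 := by
  have := congrArg (eval 1) hg
  simp only [eval_mul, eval_finset_sum, eval_C, h1, mul_one] at this
  exact this.symm

lemma bound_le_one (h0 : Q 0 = 1) (h1 : ∀ n, (Q n).eval 1 = 1) (hlin : NonnegLin Q)
    {M : ℝ} (hM : ∀ n, |(Q n).eval 0| ≤ M) : ∀ n, |(Q n).eval 0| ≤ 1 := by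
  choose g hg1 hg2 using hlin
  set g' : ℕ → ℕ → ℕ → ℝ := fun m n i => if i ≤ m + n then g m n i else 0 with hg'
  have hg'nn : ∀ m n i, 0 ≤ g' m n i := by
    intro m n i
    simp only [hg']
    split
    · exact hg1 m n i (by assumption)
    · exact le_refl _
  have hA : ∀ m n N, m + n < N → Q m * Q n = ∑ i ∈ Finset.range N, C (g' m n i) * Q i := by
    intro m n N hN
    rw [hg2 m n]
    rw [← Finset.sum_subset (Finset.range_subset_range.mpr (by omega : m+n+1 ≤ N))
      (fun i _ hi => by
        simp only [Finset.mem_range, not_lt] at hi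
        have : ¬ i ≤ m + n := by omega
        simp [hg', this])]
    refine Finset.sum_congr rfl (fun i hi => ?_)
    have : i ≤ m + n := by have := Finset.mem_range.mp hi; omega
    simp [hg', this]
  have hB : ∀ m n N, m + n < N → ∑ i ∈ Finset.range N, g' m n i = 1 := by
    intro m n N hN
    rw [← Finset.sum_subset (Finset.range_subset_range.mpr (by omega : m+n+1 ≤ N))
      (fun i _ hi => by
        simp only [Finset.mem_range, not_lt] at hi
        have : ¬ i ≤ m + n := by omega
        simp [hg', this])]
    rw [Finset.sum_congr rfl (fun i hi => by
      have : i ≤ m + n := by have := Finset.mem_range.mp hi; omega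
      simp [hg', this] : ∀ i ∈ Finset.range (m+n+1), g' m n i = g m n i)]
    exact lin_sum_one h1 (hg2 m n)
  have hM1 : (1:ℝ) ≤ M := by have := hM 0; rwa [h0, eval_one, abs_one] at this
  have comb : ∀ (j n : ℕ), ∃ (N : ℕ) (h : ℕ → ℝ), (∀ k, 0 ≤ h k) ∧
      (∑ k ∈ Finset.range N, h k ≤ 1) ∧ (Q n)^(j+1) = ∑ k ∈ Finset.range N, C (h k) * Q k := by
    intro j n
    induction j with
    | zero =>
      refine ⟨n+1, fun k => if k = n then 1 else 0, fun k => by positivity, ?_, ?_⟩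
      · rw [Finset.sum_ite_eq' (Finset.range (n+1)) n (fun _ => (1:ℝ))]
        simp
      · rw [pow_one]
        rw [Finset.sum_congr rfl (fun k _ => by
          rw [apply_ite C, map_one, map_zero, ite_mul, one_mul, zero_mul] :
          ∀ k ∈ Finset.range (n+1), C (if k = n then (1:ℝ) else 0) * Q k
            = if k = n then Q k else 0)]
        rw [Finset.sum_ite_eq' (Finset.range (n+1)) n Q]
        simp
    | succ j ih =>
      obtain ⟨N, h, hh1, hh2, hh3⟩ := ih
      refine ⟨N + n + 1, fun i => ∑ k ∈ Finset.range N, h k * g' k n i, ?_, ?_, ?_⟩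
      · intro i
        exact Finset.sum_nonneg fun k _ => mul_nonneg (hh1 k) (hg'nn k n i)
      · rw [Finset.sum_comm]
        calc ∑ k ∈ Finset.range N, ∑ i ∈ Finset.range (N+n+1), h k * g' k n i
            = ∑ k ∈ Finset.range N, h k * ∑ i ∈ Finset.range (N+n+1), g' k n i := by
              refine Finset.sum_congr rfl fun k _ => ?_; rw [Finset.mul_sum]
          _ = ∑ k ∈ Finset.range N, h k := by
              refine Finset.sum_congr rfl fun k hk => ?_
              rw [hB k n (N+n+1) (by have := Finset.mem_range.mp hk; omega), mul_one]
          _ ≤ 1 := hh2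
      · have : (Q n)^(j+1+1) = (Q n)^(j+1) * Q n := by ring
        rw [this, hh3, Finset.sum_mul]
        calc (∑ k ∈ Finset.range N, C (h k) * Q k * Q n)
            = ∑ k ∈ Finset.range N, C (h k) *
                ∑ i ∈ Finset.range (N+n+1), C (g' k n i) * Q i := by
              refine Finset.sum_congr rfl fun k hk => ?_
              rw [mul_assoc, hA k n (N+n+1) (by have := Finset.mem_range.mp hk; omega)]
          _ = ∑ k ∈ Finset.range N, ∑ i ∈ Finset.range (N+n+1),
                C (h k * g' k n i) * Q i := by
              refine Finset.sum_congr rfl fun k _ => ?_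
              rw [Finset.mul_sum]
              refine Finset.sum_congr rfl fun i _ => ?_
              rw [map_mul]; ring
          _ = ∑ i ∈ Finset.range (N+n+1),
                C (∑ k ∈ Finset.range N, h k * g' k n i) * Q i := by
              rw [Finset.sum_comm]
              refine Finset.sum_congr rfl fun i _ => ?_
              rw [map_sum, Finset.sum_mul]
  have hMnn : (0:ℝ) ≤ M := le_trans zero_le_one hM1
  have hbound : ∀ j n, |(Q n).eval 0| ^ (j+1) ≤ M := by
    intro j n
    obtain ⟨N, h, hh1, hh2, hh3⟩ := comb j n
    have := congrArg (eval 0) hh3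
    simp only [eval_pow, eval_finset_sum, eval_mul, eval_C] at this
    rw [← abs_pow, this]
    calc |∑ k ∈ Finset.range N, h k * (Q k).eval 0|
        ≤ ∑ k ∈ Finset.range N, |h k * (Q k).eval 0| := Finset.abs_sum_le_sum_abs _ _
      _ ≤ ∑ k ∈ Finset.range N, h k * M := by
          refine Finset.sum_le_sum fun k _ => ?_
          rw [abs_mul, abs_of_nonneg (hh1 k)]
          exact mul_le_mul_of_nonneg_left (hM k) (hh1 k)
      _ = (∑ k ∈ Finset.range N, h k) * M := by rw [Finset.sum_mul]
      _ ≤ 1 * M := mul_le_mul_of_nonneg_right hh2 hMnn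
      _ = M := one_mul M
  intro n
  by_contra hgt
  push_neg at hgt
  obtain ⟨j, hj⟩ := pow_unbounded_of_one_lt M hgt
  have : |(Q n).eval 0| ^ j ≤ M := by
    cases j with
    | zero => simpa using hM1
    | succ i => exact hbound i n
  linarith

lemma eval_zero_step (hQ : IsRWPS γ Q) (k : ℕ) :
    (1 - γ (2*k+1)) * (Q (2*k+2)).eval 0 = - (γ (2*k+1) * (Q (2*k)).eval 0) := by
  obtain ⟨h0, h1, hrec⟩ := hQ
  have h := hrec (2*k+1) (by omega)
  have he := congrArg (eval 0) h
  simp only [eval_mul, eval_add, eval_C, eval_X, zero_mul, Nat.add_sub_cancel] at he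
  have : 2*k+1+1 = 2*k+2 := by omega
  rw [this] at he
  linarith

lemma key_identity (hQ : IsRWPS γ Q) (hodd : ∀ k, γ (2*k+1) = 1/2) (t : ℕ) :
    C 2 * (C 2 * (C (1 - γ 2) * (Q 3 * Q (2*t+3)))) =
      C 2 * (C (1 - γ (2*t+4)) * Q (2*t+6)) + C 2 * (C (1 - γ (2*t+2) - γ 2) * Q (2*t+4))
      + C 2 * (C (γ (2*t+4) - γ 2) * Q (2*t+2)) + C 2 * (C (γ (2*t+2)) * Q (2*t)) := by
  obtain ⟨h0, h1, hrec⟩ := hQ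
  have half : (C (2:ℝ)) * C ((1:ℝ)/2) = 1 := by rw [← C_mul]; norm_num
  have hOdd : ∀ k, C 2 * (X * Q (2*k+1)) = Q (2*k+2) + Q (2*k) := by
    intro k
    have h := hrec (2*k+1) (by omega)
    rw [hodd k, Nat.add_sub_cancel, show 2*k+1+1 = 2*k+2 by omega,
      show (1:ℝ) - 1/2 = 1/2 by norm_num] at h
    rw [h, mul_add, ← mul_assoc, ← mul_assoc, half, one_mul, one_mul]
  have hEven : ∀ k, X * Q (2*k+2) = C (1 - γ (2*k+2)) * Q (2*k+3) + C (γ (2*k+2)) * Q (2*k+1) := by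
    intro k
    have h := hrec (2*k+2) (by omega)
    rwa [show 2*k+2-1 = 2*k+1 by omega, show 2*k+2+1 = 2*k+3 by omega] at h
  have F := hOdd 0
  rw [show 2*0+1 = 1 by omega, show 2*0+2 = 2 by omega, show 2*0 = 0 by omega, h0, h1] at F
  have G := hrec 2 (by omega)
  rw [show (2:ℕ)-1 = 1 by omega, show (2:ℕ)+1 = 3 by omega, h1] at G
  have A := hOdd (t+1)
  rw [show 2*(t+1)+1 = 2*t+3 by omega, show 2*(t+1)+2 = 2*t+4 by omega,
    show 2*(t+1) = 2*t+2 by omega] at A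
  have B := hEven (t+1)
  rw [show 2*(t+1)+2 = 2*t+4 by omega, show 2*(t+1)+3 = 2*t+5 by omega,
    show 2*(t+1)+1 = 2*t+3 by omega] at B
  have Cc := hOdd (t+2)
  rw [show 2*(t+2)+1 = 2*t+5 by omega, show 2*(t+2)+2 = 2*t+6 by omega,
    show 2*(t+2) = 2*t+4 by omega] at Cc
  have D := hOdd t
  rw [show 2*t+1 = 2*t+1 by omega] at D
  have E := hEven t
  rw [show 2*t+3 = 2*t+3 by omega] at E
  -- normalize C-constants
  simp only [map_sub, map_add, map_one, map_ofNat] at *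
  -- stepwise derivation
  have s1 : Q 2 = 2 * (X*X) - 1 := by linear_combination -F
  have t2 : 2 * (X * (X * Q (2*t+3))) = X * Q (2*t+4) + X * Q (2*t+2) := by
    linear_combination X * A
  have t3 : 2 * (X * (X * Q (2*t+3))) =
      (1 - C (γ (2*t+4))) * Q (2*t+5) + C (γ (2*t+4)) * Q (2*t+3)
      + (1 - C (γ (2*t+2))) * Q (2*t+3) + C (γ (2*t+2)) * Q (2*t+1) := by
    linear_combination t2 + B + E
  have t4 : 2 * (2 * (X * (X * (X * Q (2*t+3))))) =
      (1 - C (γ (2*t+4))) * (Q (2*t+6) + Q (2*t+4))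
      + (C (γ (2*t+4)) + (1 - C (γ (2*t+2)))) * (Q (2*t+4) + Q (2*t+2))
      + C (γ (2*t+2)) * (Q (2*t+2) + Q (2*t)) := by
    linear_combination (2 * X) * t3 + (1 - C (γ (2*t+4))) * Cc
      + (C (γ (2*t+4)) + (1 - C (γ (2*t+2)))) * A + C (γ (2*t+2)) * D
  have s3 : 2 * ((1 - C (γ 2)) * Q 3) = 2 * (2 * (X*(X*X))) - 2 * ((1 + C (γ 2)) * X) := by
    linear_combination (2 * X) * s1 - 2 * G
  linear_combination (2 * Q (2*t+3)) * s3 + 2 * t4 - (2 * (1 + C (γ 2))) * A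

lemma key_nonneg (hγ : ∀ n, 1 ≤ n → γ n ∈ Set.Ioo (0:ℝ) 1) (hQ : IsRWPS γ Q)
    (hodd : ∀ k, γ (2*k+1) = 1/2) (hlin : NonnegLin Q) (t : ℕ) :
    0 ≤ 1 - γ (2*t+2) - γ 2 := by
  obtain ⟨g, hg1, hg2⟩ := hlin 3 (2*t+3)
  rw [show 3 + (2*t+3) + 1 = 2*t+7 by omega] at hg2
  have hg1' : 0 ≤ g (2*t+4) := hg1 (2*t+4) (by omega)
  have hγ2 := hγ 2 (by omega)
  have hkey := key_identity hQ hodd t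
  set d : ℕ → ℝ := fun k =>
    (if k = 2*t+6 then 2*(1 - γ (2*t+4)) else 0) +
    (if k = 2*t+4 then 2*(1 - γ (2*t+2) - γ 2) else 0) +
    (if k = 2*t+2 then 2*(γ (2*t+4) - γ 2) else 0) +
    (if k = 2*t then 2*(γ (2*t+2)) else 0) with hd'
  have hL : ∑ k ∈ Finset.range (2*t+7), C (4*(1 - γ 2) * g k) * Q k
      = C 2 * (C 2 * (C (1 - γ 2) * (Q 3 * Q (2*t+3)))) := by
    rw [hg2, Finset.mul_sum, Finset.mul_sum, Finset.mul_sum]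
    refine Finset.sum_congr rfl fun k _ => ?_
    simp only [← mul_assoc, ← C_mul]
    norm_num
  have hsingle : ∀ (p : ℕ) (a : ℝ), p < 2*t+7 →
      ∑ k ∈ Finset.range (2*t+7), (if k = p then C a else 0) * Q k = C a * Q p := by
    intro p a hp
    rw [Finset.sum_congr rfl (fun k _ => by rw [ite_mul, zero_mul] :
      ∀ k ∈ Finset.range (2*t+7), (if k = p then C a else 0) * Q k
        = if k = p then C a * Q k else 0)]
    rw [Finset.sum_ite_eq' (Finset.range (2*t+7)) p (fun k => C a * Q k)]
    simp [Finset.mem_range.mpr hp]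
  have hR : ∑ k ∈ Finset.range (2*t+7), C (d k) * Q k
      = C 2 * (C (1 - γ (2*t+4)) * Q (2*t+6)) + C 2 * (C (1 - γ (2*t+2) - γ 2) * Q (2*t+4))
      + C 2 * (C (γ (2*t+4) - γ 2) * Q (2*t+2)) + C 2 * (C (γ (2*t+2)) * Q (2*t)) := by
    have expand : ∀ k ∈ Finset.range (2*t+7), C (d k) * Q k =
        (if k = 2*t+6 then C (2*(1 - γ (2*t+4))) else 0) * Q k +
        (if k = 2*t+4 then C (2*(1 - γ (2*t+2) - γ 2)) else 0) * Q k +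
        (if k = 2*t+2 then C (2*(γ (2*t+4) - γ 2)) else 0) * Q k +
        (if k = 2*t then C (2*(γ (2*t+2))) else 0) * Q k := by
      intro k _
      rw [hd']
      simp only [map_add, apply_ite C, map_zero, add_mul]
    rw [Finset.sum_congr rfl expand]
    rw [Finset.sum_add_distrib, Finset.sum_add_distrib, Finset.sum_add_distrib]
    rw [hsingle _ _ (by omega), hsingle _ _ (by omega), hsingle _ _ (by omega),
      hsingle _ _ (by omega)]
    simp only [← C_mul, ← mul_assoc]
  have hzero : ∑ k ∈ Finset.range (2*t+7), C (4*(1 - γ 2) * g k - d k) * Q k = 0 := by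
    simp only [map_sub, sub_mul]
    rw [Finset.sum_sub_distrib, hL, hR, hkey]
    ring
  have hdeg := rwps_deg hγ hQ
  have heq := indep_expansion (fun k => (hdeg k).1) (fun k => ne_of_gt (hdeg k).2)
    (2*t+7) _ hzero (2*t+4) (by omega)
  have hdval : d (2*t+4) = 2*(1 - γ (2*t+2) - γ 2) := by
    rw [hd']
    have h1 : ¬(2*t+4 = 2*t+6) := by omega
    have h3 : ¬(2*t+4 = 2*t+2) := by omega
    have h4 : ¬(2*t+4 = 2*t) := by omega
    simp [h1, h3, h4]
  rw [sub_eq_zero, hdval] at heq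
  nlinarith [hγ2.2, hg1']

lemma sum_indicator (Q : ℕ → Polynomial ℝ) (N p : ℕ) (a : ℝ) (hp : p < N) :
    ∑ k ∈ Finset.range N, (if k = p then C a else 0) * Q k = C a * Q p := by
  rw [Finset.sum_congr rfl (fun k _ => by rw [ite_mul, zero_mul] :
    ∀ k ∈ Finset.range N, (if k = p then C a else 0) * Q k
      = if k = p then C a * Q k else 0)]
  rw [Finset.sum_ite_eq' (Finset.range N) p (fun k => C a * Q k)]
  simp [Finset.mem_range.mpr hp]

lemma cheb_rec (hQ : IsRWPS γ Q) (hhalf : ∀ n, 1 ≤ n → γ n = 1/2) :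
    ∀ n, 1 ≤ n → (2:ℝ[X]) * (X * Q n) = Q (n+1) + Q (n-1) := by
  intro n hn
  have h := hQ.2.2 n hn
  rw [hhalf n hn, show (1:ℝ) - 1/2 = 1/2 by norm_num] at h
  have half : (2:ℝ[X]) * C ((1:ℝ)/2) = 1 := by
    rw [show (2:ℝ[X]) = C 2 from (map_ofNat C 2).symm, ← C_mul]; norm_num
  rw [h, mul_add, ← mul_assoc, ← mul_assoc, half, one_mul, one_mul]

lemma cheb_prod (hQ : IsRWPS γ Q) (hhalf : ∀ n, 1 ≤ n → γ n = 1/2) :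
    ∀ n m, n ≤ m → (2:ℝ[X]) * (Q m * Q n) = Q (m+n) + Q (m-n) := by
  have hrec0 := cheb_rec hQ hhalf
  have h0 := hQ.1
  have h1 := hQ.2.1
  have key : ∀ n, (∀ m, n ≤ m → (2:ℝ[X]) * (Q m * Q n) = Q (m+n) + Q (m-n)) ∧
      (∀ m, n+1 ≤ m → (2:ℝ[X]) * (Q m * Q (n+1)) = Q (m+n+1) + Q (m-(n+1))) := by
    intro n
    induction n with
    | zero =>
      constructor
      · intro m _; rw [h0]; simp [two_mul]
      · intro m hm
        have R := hrec0 m hm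
        rw [h1, show m + 0 + 1 = m + 1 by omega, show m - (0+1) = m - 1 by omega, ← R]
        ring
    | succ n ih =>
      refine ⟨ih.2, ?_⟩
      intro m hm
      have R1 := ih.2 m (by omega)
      have R2 := ih.1 m (by omega)
      have R3 := hrec0 (n+1) (by omega)
      have R4 := hrec0 (m+n+1) (by omega)
      have R5 := hrec0 (m-n-1) (by omega)
      rw [show m - (n+1) = m - n - 1 by omega] at R1
      rw [show m - n - 1 + 1 = m - n by omega, show m - n - 1 - 1 = m - n - 2 by omega] at R5
      rw [show n + 1 - 1 = n by omega] at R3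
      rw [show m + n + 1 - 1 = m + n by omega, show m + n + 1 + 1 = m + n + 2 by omega] at R4
      rw [show m + (n+1) + 1 = m + n + 2 by omega, show m - (n+1+1) = m - n - 2 by omega]
      linear_combination (-2 * Q m) * R3 + (2*X) * R1 - R2 + R4 + R5
  intro n m h
  exact (key n).1 m h

lemma cheb_lin (hQ : IsRWPS γ Q) (hhalf : ∀ n, 1 ≤ n → γ n = 1/2) : NonnegLin Q := by
  intro m n
  refine ⟨fun k => (if k = m+n then (1:ℝ)/2 else 0) + (if k = m+n - 2 * min m n then 1/2 else 0),
    fun k _ => by positivity, ?_⟩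
  have hsum : ∑ k ∈ Finset.range (m+n+1),
      C ((if k = m+n then (1:ℝ)/2 else 0) + (if k = m+n - 2 * min m n then 1/2 else 0)) * Q k
      = C (1/2) * Q (m+n) + C (1/2) * Q (m+n - 2 * min m n) := by
    rw [Finset.sum_congr rfl (fun k _ => by
      rw [map_add, apply_ite C, apply_ite C, map_zero, add_mul] :
      ∀ k ∈ Finset.range (m+n+1),
        C ((if k = m+n then (1:ℝ)/2 else 0) + (if k = m+n - 2 * min m n then 1/2 else 0)) * Q k
        = (if k = m+n then C ((1:ℝ)/2) else 0) * Q k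
          + (if k = m+n - 2 * min m n then C ((1:ℝ)/2) else 0) * Q k)]
    rw [Finset.sum_add_distrib, sum_indicator Q _ _ _ (by omega),
      sum_indicator Q _ _ _ (by omega)]
  rw [hsum]
  have half : C ((1:ℝ)/2) * (2:ℝ[X]) = 1 := by
    rw [show (2:ℝ[X]) = C 2 from (map_ofNat C 2).symm, ← C_mul]; norm_num
  rcases le_total n m with h | h
  · have hp := cheb_prod hQ hhalf n m h
    rw [min_eq_right h, show m + n - 2*n = m - n by omega]
    calc Q m * Q n = C (1/2) * ((2:ℝ[X]) * (Q m * Q n)) := by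
          rw [← mul_assoc, half, one_mul]
      _ = C (1/2) * Q (m+n) + C (1/2) * Q (m-n) := by rw [hp, mul_add]
  · have hp := cheb_prod hQ hhalf m n h
    rw [min_eq_left h, show m + n - 2*m = n - m by omega]
    calc Q m * Q n = C (1/2) * ((2:ℝ[X]) * (Q n * Q m)) := by
          rw [← mul_assoc, half, one_mul]; ring
      _ = C (1/2) * Q (m+n) + C (1/2) * Q (n-m) := by
          rw [hp, mul_add, show n + m = m + n by omega]

lemma cheb_bound (hQ : IsRWPS γ Q) (hhalf : ∀ n, 1 ≤ n → γ n = 1/2) :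
    ∀ n, |(Q n).eval 0| ≤ 1 := by
  have hrec0 := cheb_rec hQ hhalf
  have key : ∀ n, |(Q n).eval 0| ≤ 1 ∧ |(Q (n+1)).eval 0| ≤ 1 := by
    intro n
    induction n with
    | zero => constructor <;> simp [hQ.1, hQ.2.1]
    | succ n ih =>
      refine ⟨ih.2, ?_⟩
      have R := hrec0 (n+1) (by omega)
      have he := congrArg (eval 0) R
      simp only [eval_mul, eval_add, eval_X, eval_ofNat, zero_mul, mul_zero,
        Nat.add_sub_cancel] at he
      have : (Q (n+1+1)).eval 0 = - (Q n).eval 0 := by linarith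
      rw [this, abs_neg]
      exact ih.1
  exact fun n => (key n).1

end Aux

theorem stmt4 (c : ℕ → ℝ) (P Pt : ℕ → Polynomial ℝ)
    (hc : ∀ n, 1 ≤ n → c n ∈ Set.Ioo (0 : ℝ) 1)
    (hP : IsRWPS c P) (hPt : IsSwitchedRWPS c Pt) :
    (NonnegLin P ∧ NonnegLin Pt ∧
        (∃ M : ℝ, ∀ n : ℕ, |(P n).eval 0| ≤ M) ∧
        (∃ M : ℝ, ∀ n : ℕ, |(Pt n).eval 0| ≤ M))
      ↔ (∀ n, 1 ≤ n → c n = 1 / 2) := by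
  have hγt : ∀ n, 1 ≤ n → (fun n => 1 - c n) n ∈ Set.Ioo (0:ℝ) 1 := by
    intro n hn
    have h := hc n hn
    exact ⟨by simp only; linarith [h.2], by simp only; linarith [h.1]⟩
  have hPt' : IsRWPS (fun n => 1 - c n) Pt := by
    refine ⟨hPt.1, hPt.2.1, fun n hn => ?_⟩
    simp only
    rw [show (1:ℝ) - (1 - c n) = c n by ring]
    exact hPt.2.2 n hn
  constructor
  · rintro ⟨hlinP, hlinPt, ⟨M1, hM1⟩, ⟨M2, hM2⟩⟩
    have bP := bound_le_one hP.1 (rwps_eval_one hc hP) hlinP hM1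
    have bPt := bound_le_one hPt'.1 (rwps_eval_one hγt hPt') hlinPt hM2
    have uv : ∀ k, (P (2*k)).eval 0 * (Pt (2*k)).eval 0 = 1 := by
      intro k
      induction k with
      | zero => norm_num [hP.1, hPt.1]
      | succ k ih =>
        have h1 := eval_zero_step hP k
        have h2 := eval_zero_step hPt' k
        rw [show (1:ℝ) - (1 - c (2*k+1)) = c (2*k+1) by ring] at h2
        have hck := hc (2*k+1) (by omega)
        have hcc : c (2*k+1) * (1 - c (2*k+1)) ≠ 0 := by nlinarith [hck.1, hck.2]
        have key : ((1 - c (2*k+1)) * (P (2*k+2)).eval 0) * (c (2*k+1) * (Pt (2*k+2)).eval 0)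
            = (-(c (2*k+1) * (P (2*k)).eval 0)) * (-((1 - c (2*k+1)) * (Pt (2*k)).eval 0)) := by
          rw [h1, h2]
        have key2 : (c (2*k+1) * (1 - c (2*k+1))) * ((P (2*k+2)).eval 0 * (Pt (2*k+2)).eval 0)
            = (c (2*k+1) * (1 - c (2*k+1))) * ((P (2*k)).eval 0 * (Pt (2*k)).eval 0) := by
          linear_combination key
        have hres := mul_left_cancel₀ hcc key2
        rw [show 2*(k+1) = 2*k+2 by omega, hres, ih]
    have habs1 : ∀ k, |(P (2*k)).eval 0| = 1 := by
      intro k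
      have h := uv k
      have habs : |(P (2*k)).eval 0| * |(Pt (2*k)).eval 0| = 1 := by
        rw [← abs_mul, h, abs_one]
      refine le_antisymm (bP _) ?_
      nlinarith [bPt (2*k), abs_nonneg ((P (2*k)).eval 0), abs_nonneg ((Pt (2*k)).eval 0)]
    have hodd : ∀ k, c (2*k+1) = 1/2 := by
      intro k
      have h1 := eval_zero_step hP k
      have hck := hc (2*k+1) (by omega)
      have habs := congrArg abs h1
      rw [abs_neg, abs_mul, abs_mul, abs_of_pos (by linarith [hck.2] : (0:ℝ) < 1 - c (2*k+1)),
        abs_of_pos hck.1] at habs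
      have e1 := habs1 (k+1)
      rw [show 2*(k+1) = 2*k+2 by omega] at e1
      have e2 := habs1 k
      rw [e1, e2, mul_one, mul_one] at habs
      linarith
    have hoP := key_nonneg hc hP hodd hlinP
    have hoddt : ∀ k, (fun n => 1 - c n) (2*k+1) = 1/2 := by
      intro k; simp only; rw [hodd k]; norm_num
    have hoPt := key_nonneg hγt hPt' hoddt hlinPt
    have hc2 : c 2 = 1/2 := by
      have h1 := hoP 0
      have h2 := hoPt 0
      norm_num at h1 h2
      linarith
    have heven : ∀ t, c (2*t+2) = 1/2 := by
      intro t
      have h1 := hoP t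
      have h2 := hoPt t
      rw [hc2] at h1 h2
      linarith
    intro n hn
    rcases Nat.even_or_odd n with ⟨k, hk⟩ | ⟨k, hk⟩
    · have hk1 : 1 ≤ k := by omega
      rw [show n = 2*(k-1)+2 by omega]
      exact heven (k-1)
    · rw [show n = 2*k+1 by omega]
      exact hodd k
  · intro h
    have h' : ∀ n, 1 ≤ n → (fun n => 1 - c n) n = 1/2 := by
      intro n hn; simp only; rw [h n hn]; norm_num
    exact ⟨cheb_lin hP h, cheb_lin hPt' h', ⟨1, cheb_bound hP h⟩, ⟨1, cheb_bound hPt' h'⟩⟩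
end

section
/- Let (c_n)_{n≥1} ⊆ (0,1) with associated RWPS (P_n)_{n≥0} and switched RWPS (P̃_n)_{n≥0}, and suppose both (P_n) and (P̃_n) satisfy nonnegative linearization of products. Then: if c_1 ≤ 1/2 then sup_{n≥0} |P_n(0)| < ∞, and if c_1 ≥ 1/2 then sup_{n≥0} |P̃_n(0)| < ∞. -/
open Polynomial

private lemma rwps_rec {c : ℕ → ℝ} {P : ℕ → Polynomial ℝ} (hP : IsRWPS c P) (n : ℕ) :
    X * P (n + 1) = C (1 - c (n + 1)) * P (n + 2) + C (c (n + 1)) * P n := by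
  simpa using hP.2.2 (n + 1) (Nat.le_add_left 1 n)

private lemma rwps_deg_s5 {c : ℕ → ℝ} {P : ℕ → Polynomial ℝ}
    (hc : ∀ n, 1 ≤ n → c n ∈ Set.Ioo (0:ℝ) 1) (hP : IsRWPS c P) :
    ∀ n, (P n).natDegree ≤ n ∧ (P n).coeff n ≠ 0 := by
  have main : ∀ n, ((P n).natDegree ≤ n ∧ (P n).coeff n ≠ 0) ∧
      ((P (n+1)).natDegree ≤ n+1 ∧ (P (n+1)).coeff (n+1) ≠ 0) := by
    intro n
    induction n with
    | zero =>
      refine ⟨⟨?_, ?_⟩, ?_, ?_⟩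
      · rw [hP.1]; simp
      · rw [hP.1]; simp
      · rw [hP.2.1]; exact natDegree_X_le
      · rw [hP.2.1]; simp
    | succ n ih =>
      have ha : (1 : ℝ) - c (n+1) ≠ 0 := by
        have := hc (n+1) (by omega); have := this.2; intro h; linarith
      have hr := rwps_rec hP n
      have hPn2 : P (n+2) = C ((1 : ℝ) - c (n+1))⁻¹ * (X * P (n+1) - C (c (n+1)) * P n) := by
        rw [hr, add_sub_cancel_right, ← mul_assoc, ← C_mul, inv_mul_cancel₀ ha, C_1, one_mul]
      refine ⟨ih.2, ?_, ?_⟩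
      · rw [hPn2]
        refine le_trans (natDegree_C_mul_le _ _) (le_trans (natDegree_sub_le _ _) ?_)
        refine max_le (le_trans (natDegree_mul_le) ?_) (le_trans (natDegree_C_mul_le _ _) ?_)
        · have := ih.2.1
          have hx : (X : Polynomial ℝ).natDegree ≤ 1 := natDegree_X_le
          omega
        · have := ih.1.1; omega
      · rw [hPn2, coeff_C_mul, coeff_sub, coeff_C_mul]
        have h1 : (X * P (n+1)).coeff (n+2) = (P (n+1)).coeff (n+1) := coeff_X_mul _ _
        have h2 : (P n).coeff (n+2) = 0 :=
          coeff_eq_zero_of_natDegree_lt (lt_of_le_of_lt ih.1.1 (by omega))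
        rw [h1, h2, mul_zero, sub_zero]
        exact mul_ne_zero (inv_ne_zero ha) ih.2.2
  exact fun n => (main n).1

private lemma sum_C_mul_eq_zero {L : ℕ → Polynomial ℝ}
    (hdeg : ∀ k, (L k).natDegree ≤ k) (hne : ∀ k, (L k).coeff k ≠ 0) :
    ∀ m (g : ℕ → ℝ), (∑ k ∈ Finset.range m, C (g k) * L k) = 0 → ∀ k < m, g k = 0 := by
  intro m
  induction m with
  | zero => intro g _ k hk; omega
  | succ m ih =>
    intro g h k hk
    have hm : g m = 0 := by
      have hcoeff : ((∑ k ∈ Finset.range (m+1), C (g k) * L k)).coeff m = 0 := by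
        rw [h]; simp
      rw [finset_sum_coeff, Finset.sum_range_succ] at hcoeff
      have h0 : ∀ j ∈ Finset.range m, (C (g j) * L j).coeff m = 0 := by
        intro j hj
        rw [coeff_C_mul,
          coeff_eq_zero_of_natDegree_lt (lt_of_le_of_lt (hdeg j) (Finset.mem_range.mp hj)),
          mul_zero]
      rw [Finset.sum_eq_zero h0, zero_add, coeff_C_mul] at hcoeff
      exact (mul_eq_zero.mp hcoeff).resolve_right (hne m)
    rcases Nat.lt_succ_iff_lt_or_eq.mp hk with h' | h'
    · refine ih g ?_ k h'
      rw [Finset.sum_range_succ, hm, map_zero, zero_mul, add_zero] at h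
      exact h
    · rw [h']; exact hm

/-- Key necessary condition from nonnegative linearization of `P 2 * P (m+2)`. -/
private lemma key_ineq {c : ℕ → ℝ} {P : ℕ → Polynomial ℝ}
    (hc : ∀ n, 1 ≤ n → c n ∈ Set.Ioo (0:ℝ) 1) (hP : IsRWPS c P) (hlin : NonnegLin P)
    (m : ℕ) :
    c 1 ≤ (1 - c (m+2)) * c (m+3) + c (m+2) * (1 - c (m+1)) := by
  have ha1 : (0:ℝ) < 1 - c 1 := by have := (hc 1 le_rfl).2; linarith
  obtain ⟨g, hg0, hgsum⟩ := hlin 2 (m+2)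
  have e1 : 2 + (m + 2) = m + 4 := by omega
  rw [e1] at hg0
  have e2 : 2 + (m + 2) + 1 = m + 5 := by omega
  rw [e2] at hgsum
  -- the explicit linearization
  have h1 : X * P 1 = C (1 - c 1) * P 2 + C (c 1) * P 0 := by
    simpa using hP.2.2 1 le_rfl
  rw [hP.1, hP.2.1] at h1
  have hA := rwps_rec hP (m+1)
  have hB := rwps_rec hP (m+2)
  have hC := rwps_rec hP m
  have hid : (1 - C (c 1)) * (P 2 * P (m+2)) =
      (1 - C (c (m+2))) * (1 - C (c (m+3))) * P (m+4)
      + ((1 - C (c (m+2))) * C (c (m+3)) + C (c (m+2)) * (1 - C (c (m+1)))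
          - C (c 1)) * P (m+2)
      + C (c (m+2)) * C (c (m+1)) * P m := by
    simp only [map_sub, map_one, mul_one] at h1 hA hB hC
    linear_combination (-(P (m+2))) * h1 + X * hA + (1 - C (c (m+2))) * hB
      + C (c (m+2)) * hC
  set e : ℕ → ℝ := fun k =>
    if k = m+4 then (1 - c (m+2)) * (1 - c (m+3))
    else if k = m+2 then (1 - c (m+2)) * c (m+3) + c (m+2) * (1 - c (m+1)) - c 1
    else if k = m then c (m+2) * c (m+1)
    else 0 with he
  have em4 : e (m+4) = (1 - c (m+2)) * (1 - c (m+3)) := by simp [he]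
  have em2 : e (m+2) = (1 - c (m+2)) * c (m+3) + c (m+2) * (1 - c (m+1)) - c 1 := by
    simp only [he]; rw [if_neg (by omega)]; simp
  have em : e m = c (m+2) * c (m+1) := by
    simp only [he]; rw [if_neg (by omega), if_neg (by omega)]; simp
  have hesum : ∑ k ∈ Finset.range (m+5), C (e k) * P k =
      C (e m) * P m + C (e (m+2)) * P (m+2) + C (e (m+4)) * P (m+4) := by
    rw [← Finset.sum_subset (s₁ := ({m, m+2, m+4} : Finset ℕ))
      (by intro x hx; simp only [Finset.mem_insert, Finset.mem_singleton] at hx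
          rcases hx with rfl | rfl | rfl <;> simp [Finset.mem_range])
      (by intro x _ hx
          simp only [Finset.mem_insert, Finset.mem_singleton, not_or] at hx
          have : e x = 0 := by
            simp only [he]; rw [if_neg hx.2.2, if_neg hx.2.1, if_neg hx.1]
          rw [this, map_zero, zero_mul])]
    rw [Finset.sum_insert (by simp only [Finset.mem_insert, Finset.mem_singleton]; omega),
      Finset.sum_insert (by simp only [Finset.mem_singleton]; omega),
      Finset.sum_singleton]
    ring
  have hzero : ∑ k ∈ Finset.range (m+5), C ((1 - c 1) * g k - e k) * P k = 0 := by
    have expand : ∀ k ∈ Finset.range (m+5), C ((1 - c 1) * g k - e k) * P k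
        = C (1 - c 1) * (C (g k) * P k) - C (e k) * P k := by
      intro k _; rw [map_sub, map_mul]; ring
    rw [Finset.sum_congr rfl expand, Finset.sum_sub_distrib, ← Finset.mul_sum, ← hgsum,
      hesum, em, em2, em4]
    simp only [map_sub, map_add, map_mul, map_one]
    linear_combination hid
  have hdeg := rwps_deg_s5 hc hP
  have huniq := sum_C_mul_eq_zero (fun k => (hdeg k).1) (fun k => (hdeg k).2)
    (m+5) _ hzero (m+2) (by omega)
  have hge : 0 ≤ g (m+2) := hg0 (m+2) (by omega)
  have : (1 - c 1) * g (m+2) = e (m+2) := by linarith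
  rw [em2] at this
  nlinarith [mul_nonneg (le_of_lt ha1) hge]

private lemma master {c d : ℕ → ℝ} {P Q : ℕ → Polynomial ℝ}
    (hcd : ∀ n, d n = 1 - c n)
    (hc : ∀ n, 1 ≤ n → c n ∈ Set.Ioo (0:ℝ) 1)
    (hP : IsRWPS c P) (hQ : IsRWPS d Q) (hlinQ : NonnegLin Q)
    (h1 : c 1 ≤ 1/2) : ∀ n, |(P n).eval 0| ≤ 1 := by
  have hd : ∀ n, 1 ≤ n → d n ∈ Set.Ioo (0:ℝ) 1 := by
    intro n hn
    have := hc n hn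
    exact ⟨by rw [hcd]; linarith [this.2], by rw [hcd]; linarith [this.1]⟩
  -- all odd-index c's stay ≤ 1/2
  have hodd : ∀ m, c (2*m+1) ≤ 1/2 := by
    intro m
    induction m with
    | zero => exact h1
    | succ m ih =>
      have hk := key_ineq hd hQ hlinQ (2*m)
      simp only [hcd] at hk
      have ht := hc (2*m+2) (by omega)
      have h3 := hc (2*m+3) (by omega)
      have goal3 : c (2*m+3) ≤ 1/2 := by nlinarith [ht.1, ht.2, h3.1, h3.2, ih]
      have : 2*(m+1)+1 = 2*m+3 := by ring
      rw [this]; exact goal3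
  -- evaluation at 0
  have heval : ∀ n, 0 = (1 - c (n+1)) * (P (n+2)).eval 0 + c (n+1) * (P n).eval 0 := by
    intro n
    have := congrArg (Polynomial.eval 0) (rwps_rec hP n)
    simpa using this
  have pairs : ∀ m, (P (2*m+1)).eval 0 = 0 ∧ |(P (2*m)).eval 0| ≤ 1 := by
    intro m
    induction m with
    | zero =>
      constructor
      · rw [hP.2.1]; simp
      · rw [hP.1]; simp
    | succ m ih =>
      have haodd := hodd m
      have hcm1 := hc (2*m+1) (by omega)
      have hcm2 := hc (2*m+2) (by omega)
      constructor
      · have h := heval (2*m+1)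
        rw [ih.1] at h
        have hne : (1:ℝ) - c (2*m+2) ≠ 0 := by intro hx; nlinarith [hcm2.2]
        have : (1 - c (2*m+2)) * (P (2*m+1+2)).eval 0 = 0 := by linarith
        have h0 := (mul_eq_zero.mp this).resolve_left hne
        have hix : 2*(m+1)+1 = 2*m+1+2 := by ring
        rw [hix]; exact h0
      · have h := heval (2*m)
        have ha : (0:ℝ) < 1 - c (2*m+1) := by linarith [hcm1.2]
        have key2 : (1 - c (2*m+1)) * (P (2*m+2)).eval 0 = -(c (2*m+1) * (P (2*m)).eval 0) := by
          linarith
        have habs : (1 - c (2*m+1)) * |(P (2*m+2)).eval 0| = c (2*m+1) * |(P (2*m)).eval 0| := by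
          have := congrArg abs key2
          rwa [abs_mul, abs_neg, abs_mul, abs_of_pos ha, abs_of_pos hcm1.1] at this
        have hix : 2*(m+1) = 2*m+2 := by ring
        rw [hix]
        nlinarith [abs_nonneg ((P (2*m+2)).eval 0), abs_nonneg ((P (2*m)).eval 0), ih.2, habs,
          hcm1.1]
  intro n
  rcases Nat.even_or_odd n with ⟨m, rfl⟩ | ⟨m, rfl⟩
  · have := (pairs m).2
    rwa [show m + m = 2*m by ring]
  · rw [(pairs m).1]; simp

theorem stmt5 (c : ℕ → ℝ) (P Pt : ℕ → Polynomial ℝ)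
    (hc : ∀ n, 1 ≤ n → c n ∈ Set.Ioo (0 : ℝ) 1)
    (hP : IsRWPS c P) (hPt : IsSwitchedRWPS c Pt)
    (hlinP : NonnegLin P) (hlinPt : NonnegLin Pt) :
    (c 1 ≤ 1 / 2 → ∃ M : ℝ, ∀ n : ℕ, |(P n).eval 0| ≤ M) ∧
    (1 / 2 ≤ c 1 → ∃ M : ℝ, ∀ n : ℕ, |(Pt n).eval 0| ≤ M) := by
  have hPt' : IsRWPS (fun n => 1 - c n) Pt := by
    refine ⟨hPt.1, hPt.2.1, fun n hn => ?_⟩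
    have := hPt.2.2 n hn
    simpa [sub_sub_cancel] using this
  constructor
  · intro h1
    exact ⟨1, master (d := fun n => 1 - c n) (fun n => rfl) hc hP hPt' hlinPt h1⟩
  · intro h1
    refine ⟨1, master (c := fun n => 1 - c n) (d := c) (fun n => by ring) ?_ hPt' hP hlinP
      (by show 1 - c 1 ≤ 1/2; linarith)⟩
    intro n hn
    have h' := hc n hn
    simp only [Set.mem_Ioo] at h' ⊢
    exact ⟨show (0:ℝ) < 1 - c n by linarith [h'.2], show (1:ℝ) - c n < 1 by linarith [h'.1]⟩
end

section
/- Let (c_n)_{n≥1} ⊆ (0,1) with associated RWPS (P_n)_{n≥0} and switched RWPS (P̃_n)_{n≥0}. Then the following are equivalent: (a) both (P_n) and (P̃_n) satisfy nonnegative linearization of products and both Haar functions h and h̃ are increasing (h(n) ≤ h(n+1) and h̃(n) ≤ h̃(n+1) for all n ≥ 0); (b) c_n = 1/2 for all n ≥ 1 (i.e., (P_n) is the Chebyshev sequence of the first kind). -/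
/-
If both Haar functions increase, then `h(n) ≤ h(n+1)` reads `c_{n+1} ≤ a_n` and `h̃(n) ≤ h̃(n+1)`
reads `a_{n+1} ≤ c_n`, so `c_{n+1} = 1 - c_n` and the sequence `c` alternates between `c_1` and
`a_1`. For such a sequence the coefficient of `P₂` in the linearization of `P₂²` equals
`a₁ - c₁`; its nonnegativity for `P` and for `P̃` (where `c₁` and `a₁` change roles) forces
`c₁ = a₁ = 1/2`. Conversely, for `c ≡ 1/2` both sequences are the Chebyshev polynomials, for
which `2 P_m P_n = P_{m+n} + P_{|m-n|}`, and both Haar functions are `1, 2, 2, 2, …`.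
-/

open Polynomial

def IsHaarFunction (c h : ℕ → ℝ) : Prop :=
  h 0 = 1 ∧ h 1 = 1 / c 1 ∧ ∀ n, 1 ≤ n → h (n + 1) = h n * (1 - c n) / c (n + 1)

lemma isSwitchedRWPS_iff {c : ℕ → ℝ} {P : ℕ → ℝ[X]} :
    IsSwitchedRWPS c P ↔ IsRWPS (fun n => 1 - c n) P := by
  simp only [IsSwitchedRWPS, IsRWPS, sub_sub_cancel]

namespace IsHaarFunction

variable {c h : ℕ → ℝ}

lemma pos (hh : IsHaarFunction c h) (hc : ∀ n, 1 ≤ n → c n ∈ Set.Ioo 0 1) (n : ℕ) :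
    0 < h n := by
  obtain ⟨h0, h1, hrec⟩ := hh
  induction n with
  | zero => simp [h0]
  | succ n ih =>
    rcases Nat.eq_zero_or_pos n with rfl | hn
    · simpa [h1] using (hc 1 le_rfl).1
    · rw [hrec n hn]
      exact div_pos (mul_pos ih (sub_pos.2 (hc n hn).2)) (hc (n + 1) (by omega)).1

lemma le_succ_iff (hh : IsHaarFunction c h) (hc : ∀ n, 1 ≤ n → c n ∈ Set.Ioo 0 1) {n : ℕ}
    (hn : 1 ≤ n) : h n ≤ h (n + 1) ↔ c (n + 1) ≤ 1 - c n := by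
  rw [hh.2.2 n hn, le_div_iff₀ (hc (n + 1) (by omega)).1, mul_le_mul_iff_right₀ (hh.pos hc n)]

lemma le_succ_of_half (hh : IsHaarFunction c h) (hhalf : ∀ n, 1 ≤ n → c n = 1 / 2) (n : ℕ) :
    h n ≤ h (n + 1) := by
  obtain ⟨h0, h1, hrec⟩ := hh
  rcases Nat.eq_zero_or_pos n with rfl | hn
  · rw [h0, h1, hhalf 1 le_rfl]; norm_num
  · rw [hrec n hn, hhalf n hn, hhalf (n + 1) (by omega)]; norm_num

end IsHaarFunction

lemma C_half_mul_two : C (1 / 2 : ℝ) * 2 = 1 := by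
  rw [← C_ofNat, ← C_mul]; norm_num

namespace IsRWPS

variable {c : ℕ → ℝ} {P : ℕ → ℝ[X]}

lemma closedForms_of_alternating (hP : IsRWPS c P) (halt : ∀ n, 1 ≤ n → c (n + 1) = 1 - c n)
    {a b : ℝ} (hb : c 1 = b) (hab : a + b = 1) :
    C a * P 2 = X ^ 2 - C b ∧
    C a * C b * P 3 = X ^ 3 - (C a ^ 2 + C b) * X ∧
    C a ^ 2 * C b * P 4 = X ^ 4 - (C a ^ 2 + C b ^ 2 + C b) * X ^ 2 + C b ^ 3 := by
  obtain ⟨h0, h1, hrec⟩ := hP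
  have hc2 : c 2 = a := by rw [halt 1 le_rfl, hb]; linarith
  have hc3 : c 3 = b := by rw [halt 2 (by norm_num), hc2]; linarith
  have r1 : X * X = C a * P 2 + C b := by
    simpa [h0, h1, hb, ← hab] using hrec 1 le_rfl
  have r2 : X * P 2 = C b * P 3 + C a * X := by
    simpa [h1, hc2, ← hab] using hrec 2 (by norm_num)
  have r3 : X * P 3 = C a * P 4 + C b * P 2 := by
    simpa [hc3, ← hab] using hrec 3 (by norm_num)
  have q2 : C a * P 2 = X ^ 2 - C b := by linear_combination -r1
  have q3 : C a * C b * P 3 = X ^ 3 - (C a ^ 2 + C b) * X := by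
    linear_combination X * q2 - C a * r2
  refine ⟨q2, q3, ?_⟩
  linear_combination X * q3 - C a * C b * r3 - C b ^ 2 * q2

/-- Multiplying the linearization of `P 2 * P 2` by `a₁² c₁` turns every `P k` into an explicit
polynomial, whose coefficients of `X ^ 4` and `X ^ 2` are then compared. -/
lemma linCoeff_two_of_alternating (hP : IsRWPS c P) (hc1 : c 1 ∈ Set.Ioo 0 1)
    (halt : ∀ n, 1 ≤ n → c (n + 1) = 1 - c n) {g : ℕ → ℝ}
    (hg : P 2 * P 2 = ∑ k ∈ Finset.range 5, C (g k) * P k) : g 2 = 1 - 2 * c 1 := by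
  obtain ⟨b, hb⟩ : ∃ b, c 1 = b := ⟨_, rfl⟩
  obtain ⟨a, hab⟩ : ∃ a, a + b = 1 := ⟨1 - b, by ring⟩
  obtain ⟨q2, q3, q4⟩ := hP.closedForms_of_alternating halt hb hab
  simp only [Finset.sum_range_succ, Finset.sum_range_zero, zero_add, hP.1, hP.2.1, mul_one] at hg
  have key : C b * X ^ 4 + C (-2 * b ^ 2) * X ^ 2 + C (b ^ 3) =
      C (g 4) * X ^ 4 + C (a * g 3) * X ^ 3 + C (a * b * g 2 - (a ^ 2 + b ^ 2 + b) * g 4) * X ^ 2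
      + C (a ^ 2 * b * g 1 - a * (a ^ 2 + b) * g 3) * X ^ 1
      + C (a ^ 2 * b * g 0 - a * b ^ 2 * g 2 + b ^ 3 * g 4) := by
    simp only [map_add, map_sub, map_mul, map_pow, map_neg, map_ofNat]
    linear_combination C a ^ 2 * C b * hg - C b * (C a * P 2 + (X ^ 2 - C b)) * q2
      + C (g 2) * C a * C b * q2 + C (g 3) * C a * q3 + C (g 4) * q4
  have e4 := congrArg (coeff · 4) key
  have e2 := congrArg (coeff · 2) key
  simp only [coeff_add, coeff_C_mul_X_pow, coeff_C] at e4 e2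
  norm_num at e4 e2
  have hprod : a * b * (g 2 - (a - b)) = 0 := by
    linear_combination -e2 - (a ^ 2 + b ^ 2 + b) * e4 + b ^ 2 * hab
  have hb0 : b ≠ 0 := hb ▸ hc1.1.ne'
  have ha0 : a ≠ 0 := by linarith [hb ▸ hc1.2]
  have := (mul_eq_zero.1 hprod).resolve_left (mul_ne_zero ha0 hb0)
  rw [hb]
  linarith

lemma le_half_of_nonnegLin (hP : IsRWPS c P) (hc1 : c 1 ∈ Set.Ioo 0 1)
    (halt : ∀ n, 1 ≤ n → c (n + 1) = 1 - c n) (hNL : NonnegLin P) : c 1 ≤ 1 / 2 := by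
  obtain ⟨g, hg_nonneg, hg⟩ := hNL 2 2
  linarith [hg_nonneg 2 (by norm_num), hP.linCoeff_two_of_alternating hc1 halt hg]

lemma recurrence_of_half (hP : IsRWPS c P) (hhalf : ∀ n, 1 ≤ n → c n = 1 / 2) (n : ℕ) :
    2 * X * P (n + 1) = P (n + 2) + P n := by
  have h := hP.2.2 (n + 1) (by omega)
  rw [hhalf (n + 1) (by omega), Nat.add_sub_cancel] at h
  norm_num at h
  linear_combination 2 * h + (P (n + 2) + P n) * C_half_mul_two

lemma two_mul_mul_eq_of_half (hP : IsRWPS c P) (hhalf : ∀ n, 1 ≤ n → c n = 1 / 2) (n : ℕ) :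
    ∀ j, 2 * (P (j + n) * P n) = P (j + 2 * n) + P j := by
  have hr := hP.recurrence_of_half hhalf
  induction n using Nat.twoStepInduction with
  | zero => intro j; rw [hP.1, mul_zero, add_zero]; ring
  | one => intro j; rw [hP.2.1]; linear_combination hr j
  | more n ih0 ih1 =>
    intro j
    have e1 : 2 * (P (j + (n + 2)) * P (n + 1)) = P (j + 2 * n + 3) + P (j + 1) := by
      have := ih1 (j + 1)
      rwa [show j + 1 + 2 * (n + 1) = j + 2 * n + 3 by omega,
        show j + 1 + (n + 1) = j + (n + 2) by omega] at this
    have e0 : 2 * (P (j + (n + 2)) * P n) = P (j + 2 * n + 2) + P (j + 2) := by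
      have := ih0 (j + 2)
      rwa [show j + 2 + 2 * n = j + 2 * n + 2 by omega,
        show j + 2 + n = j + (n + 2) by omega] at this
    have htop : 2 * X * P (j + 2 * n + 3) = P (j + 2 * n + 4) + P (j + 2 * n + 2) := hr _
    rw [show j + 2 * (n + 2) = j + 2 * n + 4 by omega]
    linear_combination 2 * X * e1 - e0 - 2 * P (j + (n + 2)) * hr n + htop + hr j

lemma nonnegLin_of_half (hP : IsRWPS c P) (hhalf : ∀ n, 1 ≤ n → c n = 1 / 2) :
    NonnegLin P := by
  suffices h : ∀ n j, ∃ g : ℕ → ℝ, (∀ k, 0 ≤ g k) ∧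
      P (j + n) * P n = ∑ k ∈ Finset.range (j + n + n + 1), C (g k) * P k by
    intro m n
    rcases le_total n m with hnm | hmn
    · obtain ⟨j, rfl⟩ := Nat.exists_eq_add_of_le' hnm
      obtain ⟨g, hg, he⟩ := h n j
      exact ⟨g, fun k _ => hg k, he⟩
    · obtain ⟨j, rfl⟩ := Nat.exists_eq_add_of_le' hmn
      obtain ⟨g, hg, he⟩ := h m j
      refine ⟨g, fun k _ => hg k, ?_⟩
      rw [mul_comm, he, add_comm m]
  intro n j
  refine ⟨fun k => (if k = j + 2 * n then 1 / 2 else 0) + (if k = j then 1 / 2 else 0),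
    fun k => by positivity, ?_⟩
  simp only [map_add, add_mul, apply_ite C, C_0, ite_mul, zero_mul, Finset.sum_add_distrib,
    Finset.sum_ite_eq', Finset.mem_range]
  rw [if_pos (by omega), if_pos (by omega)]
  linear_combination C (1 / 2 : ℝ) * hP.two_mul_mul_eq_of_half hhalf n j
    - P (j + n) * P n * C_half_mul_two

end IsRWPS

theorem stmt6 (c h ht : ℕ → ℝ) (P Pt : ℕ → Polynomial ℝ)
    (hc : ∀ n, 1 ≤ n → c n ∈ Set.Ioo (0 : ℝ) 1)
    (hP : IsRWPS c P) (hPt : IsSwitchedRWPS c Pt)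
    (hh0 : h 0 = 1) (hh1 : h 1 = 1 / c 1)
    (hhrec : ∀ n, 1 ≤ n → h (n + 1) = h n * (1 - c n) / c (n + 1))
    (hht0 : ht 0 = 1) (hht1 : ht 1 = 1 / (1 - c 1))
    (hhtrec : ∀ n, 1 ≤ n → ht (n + 1) = ht n * c n / (1 - c (n + 1))) :
    (NonnegLin P ∧ NonnegLin Pt ∧
        (∀ n : ℕ, h n ≤ h (n + 1)) ∧ (∀ n : ℕ, ht n ≤ ht (n + 1)))
      ↔ (∀ n, 1 ≤ n → c n = 1 / 2) := by
  have hPt' : IsRWPS (fun n => 1 - c n) Pt := isSwitchedRWPS_iff.1 hPt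
  have hc' : ∀ n, 1 ≤ n → 1 - c n ∈ Set.Ioo (0 : ℝ) 1 := fun n hn =>
    ⟨by linarith [(hc n hn).2], by linarith [(hc n hn).1]⟩
  have hH : IsHaarFunction c h := ⟨hh0, hh1, hhrec⟩
  have hHt : IsHaarFunction (fun n => 1 - c n) ht := ⟨hht0, hht1, by simpa only [sub_sub_cancel]⟩
  constructor
  · rintro ⟨hNL, hNLt, hmono, hmonot⟩
    have halt : ∀ n, 1 ≤ n → c (n + 1) = 1 - c n := fun n hn =>
      le_antisymm ((hH.le_succ_iff hc hn).1 (hmono n))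
        (by linarith [(hHt.le_succ_iff hc' hn).1 (hmonot n)])
    have halt' : ∀ n, 1 ≤ n → 1 - c (n + 1) = 1 - (1 - c n) := fun n hn => by rw [halt n hn]
    have hle := hP.le_half_of_nonnegLin (hc 1 le_rfl) halt hNL
    have hle' := hPt'.le_half_of_nonnegLin (hc' 1 le_rfl) halt' hNLt
    intro n hn
    induction n, hn using Nat.le_induction with
    | base => linarith
    | succ n hn ih => rw [halt n hn, ih]; norm_num
  · intro hhalf
    have hhalf' : ∀ n, 1 ≤ n → 1 - c n = 1 / 2 := fun n hn => by rw [hhalf n hn]; norm_num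
    exact ⟨hP.nonnegLin_of_half hhalf, hPt'.nonnegLin_of_half hhalf',
      hH.le_succ_of_half hhalf, hHt.le_succ_of_half hhalf'⟩
end

section
/- Let (s_n)_{n≥1} ⊆ (0,1) satisfy s_2 < 1 - s_1/(1 - s_1) and s_n ≤ s_{n-2}/2 - 2·s_{n-1} for all n ≥ 3, and define c_n := 1 - s_n for n odd and c_n := s_n for n even. Then the Haar function h of the associated RWPS satisfies h(2n+1) < h(2n) for all n ≥ 1; in particular, h is not increasing. -/
/-!
The recursion gives `h(2n+1) / h(2n) = a_{2n} / c_{2n+1} = (1 - s_{2n}) / (1 - s_{2n+1})`, which is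
less than `1` exactly when `s_{2n+1} < s_{2n}`. The growth condition at index `2n+2`, together with
`s_{2n+2} > 0`, even gives `4 s_{2n+1} < s_{2n}`.
-/

lemma mul_one_sub_div_one_sub_lt {t x y : ℝ} (ht : 0 < t) (hyx : y < x) (hy : y < 1) :
    t * (1 - x) / (1 - y) < t := by
  rw [div_lt_iff₀ (sub_pos.2 hy)]
  nlinarith

lemma pos_of_forall_eq_mul_div {h a c : ℕ → ℝ} (h1 : 0 < h 1) (ha : ∀ n, 1 ≤ n → 0 < a n)
    (hc : ∀ n, 1 ≤ n → 0 < c n) (hrec : ∀ n, 1 ≤ n → h (n + 1) = h n * a n / c (n + 1)) :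
    ∀ n, 1 ≤ n → 0 < h n := by
  intro n hn
  induction n, hn using Nat.le_induction with
  | base => exact h1
  | succ k hk ih =>
    rw [hrec k hk]
    exact div_pos (mul_pos ih (ha k hk)) (hc (k + 1) (by omega))

theorem stmt7_general (s c h : ℕ → ℝ)
    (hs : ∀ n, 1 ≤ n → s n ∈ Set.Ioo (0 : ℝ) 1)
    (h2 : ∀ n, 3 ≤ n → s n ≤ s (n - 2) / 2 - 2 * s (n - 1))
    (hcodd : ∀ n, 1 ≤ n → Odd n → c n = 1 - s n)
    (hceven : ∀ n, 1 ≤ n → Even n → c n = s n)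
    (hh1 : h 1 = 1 / c 1)
    (hhrec : ∀ n, 1 ≤ n → h (n + 1) = h n * (1 - c n) / c (n + 1)) :
    (∀ n : ℕ, 1 ≤ n → h (2 * n + 1) < h (2 * n)) ∧ ¬ Monotone h := by
  have hc : ∀ n, 1 ≤ n → c n ∈ Set.Ioo (0 : ℝ) 1 := by
    intro n hn
    obtain ⟨hs0, hs1⟩ := hs n hn
    rcases Nat.even_or_odd n with he | ho
    · rw [hceven n hn he]; exact ⟨hs0, hs1⟩
    · rw [hcodd n hn ho]; constructor <;> linarith
  have hpos : ∀ n, 1 ≤ n → 0 < h n :=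
    pos_of_forall_eq_mul_div (by rw [hh1]; exact one_div_pos.2 (hc 1 le_rfl).1)
      (fun n hn => sub_pos.2 (hc n hn).2) (fun n hn => (hc n hn).1) hhrec
  have hdec : ∀ n : ℕ, 1 ≤ n → h (2 * n + 1) < h (2 * n) := by
    intro n hn
    have hs_lt : s (2 * n + 1) < s (2 * n) := by
      have hgrowth := h2 (2 * n + 2) (by omega)
      rw [show 2 * n + 2 - 2 = 2 * n by omega, show 2 * n + 2 - 1 = 2 * n + 1 by omega]
        at hgrowth
      linarith [(hs (2 * n + 2) (by omega)).1, (hs (2 * n + 1) (by omega)).1]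
    rw [hhrec (2 * n) (by omega), hceven (2 * n) (by omega) (even_two_mul n),
      hcodd (2 * n + 1) (by omega) (odd_two_mul_add_one n)]
    exact mul_one_sub_div_one_sub_lt (hpos _ (by omega)) hs_lt (hs _ (by omega)).2
  exact ⟨hdec, fun hmono => (hdec 1 le_rfl).not_ge (hmono (by norm_num : 2 ≤ 3))⟩

theorem stmt7 (s c h : ℕ → ℝ)
    (hs : ∀ n, 1 ≤ n → s n ∈ Set.Ioo (0 : ℝ) 1)
    (h1 : s 2 < 1 - s 1 / (1 - s 1))
    (h2 : ∀ n, 3 ≤ n → s n ≤ s (n - 2) / 2 - 2 * s (n - 1))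
    (hcodd : ∀ n, 1 ≤ n → Odd n → c n = 1 - s n)
    (hceven : ∀ n, 1 ≤ n → Even n → c n = s n)
    (hh0 : h 0 = 1) (hh1 : h 1 = 1 / c 1)
    (hhrec : ∀ n, 1 ≤ n → h (n + 1) = h n * (1 - c n) / c (n + 1)) :
    (∀ n : ℕ, 1 ≤ n → h (2 * n + 1) < h (2 * n)) ∧ ¬ Monotone h :=
  stmt7_general s c h hs h2 hcodd hceven hh1 hhrec
end

section
/- Let (s_n)_{n≥1} ⊆ (0,1) satisfy s_2 < 1 - s_1/(1 - s_1) and s_n ≤ s_{n-2}/2 - 2·s_{n-1} for all n ≥ 3. Then s_4 < 1 - s_1·s_2/(1 - s_3) - (1 - s_2 + s_2·s_3)/(1 - s_3)². -/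
theorem stmt12 (s : ℕ → ℝ)
    (hs : ∀ n, 1 ≤ n → s n ∈ Set.Ioo (0 : ℝ) 1)
    (h1 : s 2 < 1 - s 1 / (1 - s 1))
    (h2 : ∀ n, 3 ≤ n → s n ≤ s (n - 2) / 2 - 2 * s (n - 1)) :
    s 4 < 1 - s 1 * s 2 / (1 - s 3) - (1 - s 2 + s 2 * s 3) / (1 - s 3) ^ 2 := by
  obtain ⟨p1, q1⟩ := hs 1 (by norm_num)
  obtain ⟨p2, q2⟩ := hs 2 (by norm_num)
  obtain ⟨p3, q3⟩ := hs 3 (by norm_num)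
  obtain ⟨p4, q4⟩ := hs 4 (by norm_num)
  have h3 := h2 3 (by norm_num)
  have h4 := h2 4 (by norm_num)
  norm_num at h3 h4
  have d1 : (0:ℝ) < 1 - s 1 := by linarith
  have d3 : (0:ℝ) < 1 - s 3 := by linarith
  have h1' : s 1 / (1 - s 1) < 1 - s 2 := by linarith
  rw [div_lt_iff₀ d1] at h1'
  rw [show 1 - s 1 * s 2 / (1 - s 3) - (1 - s 2 + s 2 * s 3) / (1 - s 3) ^ 2
      = ((1 - s 3)^2 - s 1 * s 2 * (1 - s 3) - (1 - s 2 + s 2 * s 3)) / (1 - s 3)^2 by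
        field_simp,
    lt_div_iff₀ (by positivity : (0:ℝ) < (1 - s 3)^2)]
  nlinarith [mul_pos p2 p3, mul_pos p1 p2, mul_pos p2 d3, mul_pos p3 d3, sq_nonneg (s 3), mul_pos d3 d3, mul_pos p4 p3]
end

section
/- Let (s_n)_{n≥1} ⊆ (0,1) satisfy s_2 < 1 - s_1/(1 - s_1) and s_n ≤ s_{n-2}/2 - 2·s_{n-1} for all n ≥ 3, and define c_n := 1 - s_n for n odd and c_n := s_n for n even, with a_n := 1 - c_n. Then the sequence (α_{2n-1}²)_{n≥1} is strictly increasing, i.e., c_1 < c_3·a_2 and c_{2n-1}·a_{2n-2} < c_{2n+1}·a_{2n} for all n ≥ 2. -/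
lemma one_sub_lt_mul_one_sub_of_le_half_sub {x y z : ℝ} (hy : 0 < y) (hy1 : y < 1) (hz : 0 < z)
    (h : z ≤ x / 2 - 2 * y) : 1 - x < (1 - z) * (1 - y) := by
  -- `0 < z` forces `4 * y < x`, which absorbs the quadratic term `2 * y ^ 2` below.
  have hyx : 4 * y < x := by linarith
  calc 1 - x < (1 - x / 2 + 2 * y) * (1 - y) := by nlinarith
    _ ≤ (1 - z) * (1 - y) := by gcongr; linarith

lemma mul_one_sub_lt_mul_one_sub_of_le_half_sub {x y z w : ℝ} (hx1 : x < 1) (hy : 0 < y)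
    (hz : 0 < z) (hzx : z ≤ x / 2 - 2 * y) (hwy : w ≤ y / 2 - 2 * z) :
    (1 - y) * (1 - x) < (1 - w) * (1 - z) :=
  mul_lt_mul'' (by linarith) (by linarith) (by linarith) (by linarith)

theorem stmt13_general (s c a : ℕ → ℝ)
    (hs : ∀ n, 1 ≤ n → s n ∈ Set.Ioo (0 : ℝ) 1)
    (h2 : ∀ n, 3 ≤ n → s n ≤ s (n - 2) / 2 - 2 * s (n - 1))
    (hcodd : ∀ n, 1 ≤ n → Odd n → c n = 1 - s n)
    (hceven : ∀ n, 1 ≤ n → Even n → c n = s n)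
    (ha : ∀ n, a n = 1 - c n) :
    c 1 < c 3 * a 2 ∧
    ∀ n : ℕ, 2 ≤ n → c (2 * n - 1) * a (2 * n - 2) < c (2 * n + 1) * a (2 * n) := by
  have hrec : ∀ n, 1 ≤ n → s (n + 2) ≤ s n / 2 - 2 * s (n + 1) := fun n hn => by
    simpa using h2 (n + 2) (by omega)
  have hc : ∀ k, c (2 * k + 1) = 1 - s (2 * k + 1) := fun k =>
    hcodd _ (by omega) (odd_two_mul_add_one k)
  have ha' : ∀ k, 1 ≤ k → a (2 * k) = 1 - s (2 * k) := fun k hk => by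
    rw [ha, hceven _ (by omega) (even_two_mul k)]
  refine ⟨?_, fun n hn => ?_⟩
  · rw [hcodd 1 le_rfl odd_one, show c 3 = 1 - s 3 from hc 1, show a 2 = 1 - s 2 from ha' 1 le_rfl]
    exact one_sub_lt_mul_one_sub_of_le_half_sub (hs 2 (by norm_num)).1 (hs 2 (by norm_num)).2
      (hs 3 (by norm_num)).1 (hrec 1 le_rfl)
  · obtain ⟨k, rfl⟩ : ∃ k, n = k + 1 := ⟨n - 1, by omega⟩
    rw [show 2 * (k + 1) - 1 = 2 * k + 1 by omega, show 2 * (k + 1) - 2 = 2 * k by omega,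
      hc, hc, ha' k (by omega), ha' (k + 1) le_add_self]
    exact mul_one_sub_lt_mul_one_sub_of_le_half_sub (hs (2 * k) (by omega)).2
      (hs (2 * k + 1) (by omega)).1 (hs (2 * k + 2) (by omega)).1
      (hrec (2 * k) (by omega)) (hrec (2 * k + 1) (by omega))

theorem stmt13 (s c a : ℕ → ℝ)
    (hs : ∀ n, 1 ≤ n → s n ∈ Set.Ioo (0 : ℝ) 1)
    (h1 : s 2 < 1 - s 1 / (1 - s 1))
    (h2 : ∀ n, 3 ≤ n → s n ≤ s (n - 2) / 2 - 2 * s (n - 1))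
    (hcodd : ∀ n, 1 ≤ n → Odd n → c n = 1 - s n)
    (hceven : ∀ n, 1 ≤ n → Even n → c n = s n)
    (ha : ∀ n, a n = 1 - c n) :
    c 1 < c 3 * a 2 ∧
    ∀ n : ℕ, 2 ≤ n → c (2 * n - 1) * a (2 * n - 2) < c (2 * n + 1) * a (2 * n) :=
  stmt13_general s c a hs h2 hcodd hceven ha
end

section
/- Let (s_n)_{n≥1} ⊆ (0,1) satisfy s_2 < 1 - s_1/(1 - s_1) and s_n ≤ s_{n-2}/2 - 2·s_{n-1} for all n ≥ 3, and define c_n := 1 - s_n for n odd and c_n := s_n for n even, with a_n := 1 - c_n. Then the sequence (α̃_{2n}²)_{n≥1} is strictly increasing, i.e., a_{2n}·c_{2n-1} < a_{2n+2}·c_{2n+1} for all n ≥ 1. -/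
/-! Writing `a (2n) c (2n-1) = (1 - s (2n)) (1 - s (2n-1))`, it suffices that both `s (2n)` and
`s (2n-1)` decrease when `n` increases; this follows from the recurrence bound
`s (m+2) ≤ s m / 2 - 2 s (m+1)` together with positivity of `s`. -/

theorem lt_of_le_half_sub_two_mul {s : ℕ → ℝ} (hpos : ∀ n, 1 ≤ n → 0 < s n)
    (hrec : ∀ n, 3 ≤ n → s n ≤ s (n - 2) / 2 - 2 * s (n - 1)) {m : ℕ} (hm : 1 ≤ m) :
    s (m + 2) < s m := by
  have h := hrec (m + 2) (by omega)
  simp only [Nat.add_sub_cancel, show m + 2 - 1 = m + 1 by omega] at h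
  linarith [hpos m hm, hpos (m + 1) (by omega)]

theorem one_sub_mul_one_sub_lt_one_sub_mul_one_sub {x x' y y' : ℝ} (hx : x' < x) (hy : y' < y)
    (hx1 : x < 1) (hy1 : y < 1) : (1 - x) * (1 - y) < (1 - x') * (1 - y') :=
  mul_lt_mul'' (by linarith) (by linarith) (by linarith) (by linarith)

theorem stmt14_general (s c a : ℕ → ℝ)
    (hs : ∀ n, 1 ≤ n → s n ∈ Set.Ioo (0 : ℝ) 1)
    (h2 : ∀ n, 3 ≤ n → s n ≤ s (n - 2) / 2 - 2 * s (n - 1))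
    (hcodd : ∀ n, 1 ≤ n → Odd n → c n = 1 - s n)
    (hceven : ∀ n, 1 ≤ n → Even n → c n = s n)
    (ha : ∀ n, a n = 1 - c n) :
    ∀ n : ℕ, 1 ≤ n → a (2 * n) * c (2 * n - 1) < a (2 * n + 2) * c (2 * n + 1) := by
  intro n hn
  obtain ⟨k, rfl⟩ : ∃ k, n = k + 1 := ⟨n - 1, by omega⟩
  have hc_odd (j : ℕ) : c (2 * j + 1) = 1 - s (2 * j + 1) :=
    hcodd _ (by omega) (odd_two_mul_add_one j)
  have ha_even (j : ℕ) : a (2 * j + 2) = 1 - s (2 * j + 2) := by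
    rw [ha, hceven _ (by omega) ⟨j + 1, by ring⟩]
  have hpos (m : ℕ) (hm : 1 ≤ m) : 0 < s m := (hs m hm).1
  rw [show 2 * (k + 1) - 1 = 2 * k + 1 by omega, show 2 * (k + 1) = 2 * k + 2 by ring,
    show 2 * k + 2 + 1 = 2 * (k + 1) + 1 by ring, show 2 * k + 2 + 2 = 2 * (k + 1) + 2 by ring,
    ha_even, ha_even, hc_odd, hc_odd]
  exact one_sub_mul_one_sub_lt_one_sub_mul_one_sub
    (lt_of_le_half_sub_two_mul hpos h2 (by omega)) (lt_of_le_half_sub_two_mul hpos h2 (by omega))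
    (hs _ (by omega)).2 (hs _ (by omega)).2

theorem stmt14 (s c a : ℕ → ℝ)
    (hs : ∀ n, 1 ≤ n → s n ∈ Set.Ioo (0 : ℝ) 1)
    (h1 : s 2 < 1 - s 1 / (1 - s 1))
    (h2 : ∀ n, 3 ≤ n → s n ≤ s (n - 2) / 2 - 2 * s (n - 1))
    (hcodd : ∀ n, 1 ≤ n → Odd n → c n = 1 - s n)
    (hceven : ∀ n, 1 ≤ n → Even n → c n = s n)
    (ha : ∀ n, a n = 1 - c n) :
    ∀ n : ℕ, 1 ≤ n → a (2 * n) * c (2 * n - 1) < a (2 * n + 2) * c (2 * n + 1) :=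
  stmt14_general s c a hs h2 hcodd hceven ha
end

section
/- Let (s_n)_{n≥1} ⊆ (0,1) satisfy s_2 < 1 - s_1/(1 - s_1) and s_n ≤ s_{n-2}/2 - 2·s_{n-1} for all n ≥ 3, and define c_n := 1 - s_n for n odd and c_n := s_n for n even, with a_n := 1 - c_n. Then for every N ≥ 2 and every n with 1 ≤ n ≤ N-1, writing A := c_{2N+1}·a_{2N}, one has (1 - A·a_{2n+2})·c_{2n+1}·a_{2n} < A·a_{2n}·(A - A²·a_{2n+2} - c_{2n+2}·a_{2n+1}). -/
/-!
Write `A := c_{2N+1} a_{2N} = (1 - s_{2N+1})(1 - s_{2N})` and `B := 1 - A a_{2n+2}`. After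
substituting `c` and `a`, the difference of the two sides factors as
`(1 - s_{2n}) (1 - A) (s_{2n+1} - B (1 + A))`, so it suffices that `2B < s_{2n+1}`.
The recursion forces `s` to decrease, and by the union bound
`B < s_{2N+1} + s_{2N} + s_{2n+2} ≤ s_{2n+3} + 2 s_{2n+2} ≤ s_{2n+1} / 2`.
-/

theorem one_sub_mul_one_sub_mul_one_sub_lt_add {x y z : ℝ} (hx : 0 < x) (hy : 0 < y)
    (hz : 0 < z) (hz1 : z ≤ 1) : 1 - (1 - x) * (1 - y) * (1 - z) < x + y + z := by
  nlinarith [mul_pos hx hz, mul_pos hy hz, mul_nonneg (mul_pos hx hy).le (sub_nonneg.2 hz1)]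

theorem mul_one_sub_mul_lt_of_two_mul_lt {A p q r : ℝ} (hA0 : 0 < A) (hA1 : A < 1) (hr : 0 < r)
    (hp : p < 1) (hq : 2 * (1 - A * (1 - r)) < q) :
    (1 - A * (1 - r)) * ((1 - q) * (1 - p)) < A * (1 - p) * (A - A ^ 2 * (1 - r) - r * q) := by
  set B := 1 - A * (1 - r) with hB
  have hB0 : 0 < B := by nlinarith [mul_pos hA0 hr]
  have hfactor : A * (1 - p) * (A - A ^ 2 * (1 - r) - r * q) - B * ((1 - q) * (1 - p))
      = (1 - p) * (1 - A) * (q - B * (1 + A)) := by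
    rw [hB]; ring
  have hgap : B * (1 + A) < q := by linarith [mul_lt_of_lt_one_right hB0 hA1]
  linarith [mul_pos (mul_pos (sub_pos.2 hp) (sub_pos.2 hA1)) (sub_pos.2 hgap)]

theorem antitoneOn_Ici_one_of_le_half_sub {s : ℕ → ℝ} (hpos : ∀ n, 1 ≤ n → 0 < s n)
    (hrec : ∀ n, 3 ≤ n → s n ≤ s (n - 2) / 2 - 2 * s (n - 1)) :
    AntitoneOn s (Set.Ici 1) := by
  refine antitoneOn_of_add_one_le Set.ordConnected_Ici fun k _ hk _ => ?_
  have hk : 1 ≤ k := hk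
  have h := hrec (k + 2) (by omega)
  rw [show k + 2 - 2 = k by omega, show k + 2 - 1 = k + 1 by omega] at h
  linarith [hpos (k + 2) (by omega), hpos k hk]

theorem stmt15_general (s c a : ℕ → ℝ)
    (hs : ∀ n, 1 ≤ n → s n ∈ Set.Ioo (0 : ℝ) 1)
    (h2 : ∀ n, 3 ≤ n → s n ≤ s (n - 2) / 2 - 2 * s (n - 1))
    (hcodd : ∀ n, 1 ≤ n → Odd n → c n = 1 - s n)
    (hceven : ∀ n, 1 ≤ n → Even n → c n = s n)
    (ha : ∀ n, a n = 1 - c n) :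
    ∀ N n : ℕ, 2 ≤ N → 1 ≤ n → n ≤ N - 1 →
      (1 - c (2 * N + 1) * a (2 * N) * a (2 * n + 2)) * (c (2 * n + 1) * a (2 * n)) <
        c (2 * N + 1) * a (2 * N) * a (2 * n) *
          (c (2 * N + 1) * a (2 * N) - (c (2 * N + 1) * a (2 * N)) ^ 2 * a (2 * n + 2)
            - c (2 * n + 2) * a (2 * n + 1)) := by
  intro N n hN hn hnN
  have hodd : ∀ k, c (2 * k + 1) = 1 - s (2 * k + 1) ∧ a (2 * k + 1) = s (2 * k + 1) :=
    fun k => have hc := hcodd _ (by omega) (odd_two_mul_add_one k); ⟨hc, by rw [ha, hc]; ring⟩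
  have heven : ∀ k, 1 ≤ k → c (2 * k) = s (2 * k) ∧ a (2 * k) = 1 - s (2 * k) :=
    fun k hk => have hc := hceven _ (by omega) (even_two_mul k); ⟨hc, by rw [ha, hc]⟩
  rw [(hodd N).1, (heven N (by omega)).2, (heven n hn).2, (hodd n).1, (hodd n).2,
    show 2 * n + 2 = 2 * (n + 1) by ring, (heven (n + 1) (by omega)).1,
    (heven (n + 1) (by omega)).2]
  obtain ⟨ht0, ht1⟩ := hs (2 * N + 1) (by omega)
  obtain ⟨hu0, hu1⟩ := hs (2 * N) (by omega)
  obtain ⟨hr0, hr1⟩ := hs (2 * (n + 1)) (by omega)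
  have hanti := antitoneOn_Ici_one_of_le_half_sub (fun k hk => (hs k hk).1) h2
  have htw : s (2 * N + 1) ≤ s (2 * n + 3) :=
    hanti (Set.mem_Ici.2 (by omega)) (Set.mem_Ici.2 (by omega)) (by omega)
  have hur : s (2 * N) ≤ s (2 * (n + 1)) :=
    hanti (Set.mem_Ici.2 (by omega)) (Set.mem_Ici.2 (by omega)) (by omega)
  have hwq := h2 (2 * n + 3) (by omega)
  rw [show 2 * n + 3 - 2 = 2 * n + 1 by omega, show 2 * n + 3 - 1 = 2 * (n + 1) by omega] at hwq
  have hunion := one_sub_mul_one_sub_mul_one_sub_lt_add ht0 hu0 hr0 hr1.le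
  exact mul_one_sub_mul_lt_of_two_mul_lt (mul_pos (by linarith) (by linarith))
    (by nlinarith [mul_pos ht0 hu0]) hr0 (hs _ (by omega)).2 (by linarith)

theorem stmt15 (s c a : ℕ → ℝ)
    (hs : ∀ n, 1 ≤ n → s n ∈ Set.Ioo (0 : ℝ) 1)
    (h1 : s 2 < 1 - s 1 / (1 - s 1))
    (h2 : ∀ n, 3 ≤ n → s n ≤ s (n - 2) / 2 - 2 * s (n - 1))
    (hcodd : ∀ n, 1 ≤ n → Odd n → c n = 1 - s n)
    (hceven : ∀ n, 1 ≤ n → Even n → c n = s n)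
    (ha : ∀ n, a n = 1 - c n) :
    ∀ N n : ℕ, 2 ≤ N → 1 ≤ n → n ≤ N - 1 →
      (1 - c (2 * N + 1) * a (2 * N) * a (2 * n + 2)) * (c (2 * n + 1) * a (2 * n)) <
        c (2 * N + 1) * a (2 * N) * a (2 * n) *
          (c (2 * N + 1) * a (2 * N) - (c (2 * N + 1) * a (2 * N)) ^ 2 * a (2 * n + 2)
            - c (2 * n + 2) * a (2 * n + 1)) :=
  stmt15_general s c a hs h2 hcodd hceven ha
end

section
/- Let (s_n)_{n≥1} ⊆ (0,1) satisfy s_2 < 1 - s_1/(1 - s_1) and s_n ≤ s_{n-2}/2 - 2·s_{n-1} for all n ≥ 3, and define c_n := 1 - s_n for n odd and c_n := s_n for n even, with a_n := 1 - c_n. Then for every N ≥ 2 and every n with 1 ≤ n ≤ N-1, one has c_{2n+1}·a_{2n} < (c_{2N+1}·a_{2N})²·a_{2n}. -/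
/-!
The recursion forces `s (m + 1) < s m / 4` for every `m ≥ 1`, so `s` decreases from index `1` on.
With `u = s (2N+1)`, `v = s (2N)` and `w = s (2n+1)` this gives `4u < v < w / 4`, whence
`((1 - u)(1 - v))² ≥ 1 - 2(u + v) > 1 - w`; multiplying by `a (2n) = 1 - s (2n) > 0` concludes.
-/

theorem one_sub_two_mul_add_le_sq_mul_one_sub {u v : ℝ} (hu : 0 ≤ u) (hv : 0 ≤ v) :
    1 - 2 * (u + v) ≤ ((1 - u) * (1 - v)) ^ 2 := by
  nlinarith [sq_nonneg (u + v - u * v), mul_nonneg hu hv]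

section Recursion

variable {s : ℕ → ℝ}

theorem succ_lt_quarter_of_le_half_sub (hpos : ∀ n, 1 ≤ n → 0 < s n)
    (hrec : ∀ n, 3 ≤ n → s n ≤ s (n - 2) / 2 - 2 * s (n - 1)) {m : ℕ} (hm : 1 ≤ m) :
    s (m + 1) < s m / 4 := by
  have hstep := hrec (m + 2) (by omega)
  simp only [Nat.add_sub_cancel, show m + 2 - 1 = m + 1 by omega] at hstep
  linarith [hpos (m + 2) (by omega)]

theorem one_sub_lt_sq_of_le_half_sub (hpos : ∀ n, 1 ≤ n → 0 < s n)
    (hrec : ∀ n, 3 ≤ n → s n ≤ s (n - 2) / 2 - 2 * s (n - 1)) {m k : ℕ} (hm : 1 ≤ m)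
    (hmk : m < k) : 1 - s m < ((1 - s (k + 1)) * (1 - s k)) ^ 2 := by
  have hquarter := fun {j} (hj : 1 ≤ j) => succ_lt_quarter_of_le_half_sub hpos hrec hj
  have hanti : AntitoneOn s (Set.Ici 1) :=
    antitoneOn_nat_Ici_of_succ_le fun j hj => by linarith [hquarter hj, hpos j hj]
  have hk : s k ≤ s (m + 1) :=
    hanti (Set.mem_Ici.2 (by omega)) (Set.mem_Ici.2 (by omega)) hmk
  have hu := hquarter (show 1 ≤ k by omega)
  have hw := hquarter hm
  have hsq := one_sub_two_mul_add_le_sq_mul_one_sub (hpos (k + 1) (by omega)).le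
    (hpos k (by omega)).le
  linarith [hpos k (by omega)]

end Recursion

theorem stmt16_general (s c a : ℕ → ℝ)
    (hs : ∀ n, 1 ≤ n → s n ∈ Set.Ioo (0 : ℝ) 1)
    (h2 : ∀ n, 3 ≤ n → s n ≤ s (n - 2) / 2 - 2 * s (n - 1))
    (hcodd : ∀ n, 1 ≤ n → Odd n → c n = 1 - s n)
    (hceven : ∀ n, 1 ≤ n → Even n → c n = s n)
    (ha : ∀ n, a n = 1 - c n) :
    ∀ N n : ℕ, 2 ≤ N → 1 ≤ n → n ≤ N - 1 →
      c (2 * n + 1) * a (2 * n) < (c (2 * N + 1) * a (2 * N)) ^ 2 * a (2 * n) := by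
  intro N n hN hn hnN
  rw [ha, ha, hcodd _ (by omega) (odd_two_mul_add_one n), hcodd _ (by omega) (odd_two_mul_add_one N),
    hceven _ (by omega) (even_two_mul n), hceven _ (by omega) (even_two_mul N)]
  have ha_pos : 0 < 1 - s (2 * n) := sub_pos.2 (hs (2 * n) (by omega)).2
  exact mul_lt_mul_of_pos_right
    (one_sub_lt_sq_of_le_half_sub (fun j hj => (hs j hj).1) h2 (by omega) (by omega)) ha_pos

theorem stmt16 (s c a : ℕ → ℝ)
    (hs : ∀ n, 1 ≤ n → s n ∈ Set.Ioo (0 : ℝ) 1)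
    (h1 : s 2 < 1 - s 1 / (1 - s 1))
    (h2 : ∀ n, 3 ≤ n → s n ≤ s (n - 2) / 2 - 2 * s (n - 1))
    (hcodd : ∀ n, 1 ≤ n → Odd n → c n = 1 - s n)
    (hceven : ∀ n, 1 ≤ n → Even n → c n = s n)
    (ha : ∀ n, a n = 1 - c n) :
    ∀ N n : ℕ, 2 ≤ N → 1 ≤ n → n ≤ N - 1 →
      c (2 * n + 1) * a (2 * n) < (c (2 * N + 1) * a (2 * N)) ^ 2 * a (2 * n) :=
  stmt16_general s c a hs h2 hcodd hceven ha
end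

section
/- Let (s_n)_{n≥1} ⊆ (0,1) satisfy s_2 < 1 - s_1/(1 - s_1) and s_n ≤ s_{n-2}/2 - 2·s_{n-1} for all n ≥ 3, and define c_n := 1 - s_n for n odd and c_n := s_n for n even, with a_n := 1 - c_n. Then for every N ≥ 3 and every n with 1 ≤ n ≤ N-2, writing B := a_{2N}·c_{2N-1}, one has (1 - B·c_{2n+3})·a_{2n+2}·c_{2n+1} < B·c_{2n+1}·(B - B²·c_{2n+3} - a_{2n+3}·c_{2n+2}). -/
/-!
Write `B = a_{2N} c_{2N-1}` and `t = s_{2n+3}`, `u = s_{2n+2}`. The difference of the two sides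
factors as `c_{2n+1} (1 - B) ((1 + B)(1 - B + B t) - u)`, so it suffices that
`1 - B < u / 2 - t`. Since `1 - B < s_{2N-1} + s_{2N}`, this follows from the recurrence, which makes
the pair sums `s_m + s_{m+1}` antitone and gives `s_{2n+3} + s_{2n+4} ≤ s_{2n+2} / 2 - s_{2n+3}`.
-/

section PairSums

variable {s : ℕ → ℝ}

lemma pair_sum_le_half_sub (h2 : ∀ n, 3 ≤ n → s n ≤ s (n - 2) / 2 - 2 * s (n - 1))
    {m : ℕ} (hm : 1 ≤ m) : s (m + 1) + s (m + 2) ≤ s m / 2 - s (m + 1) := by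
  have h := h2 (m + 2) (by omega)
  simp only [Nat.add_sub_cancel, show m + 2 - 1 = m + 1 by omega] at h
  linarith

lemma pair_sum_antitoneOn (hs : ∀ n, 1 ≤ n → 0 ≤ s n)
    (h2 : ∀ n, 3 ≤ n → s n ≤ s (n - 2) / 2 - 2 * s (n - 1)) :
    AntitoneOn (fun m => s m + s (m + 1)) (Set.Ici 1) :=
  antitoneOn_nat_Ici_of_succ_le fun m hm => by
    have := pair_sum_le_half_sub h2 hm
    linarith [hs m hm, hs (m + 1) (by omega)]

end PairSums

lemma mul_sub_lt_of_one_sub_lt {B c₁ c₂ c₃ : ℝ} (hB0 : 0 < B) (hB1 : B < 1) (hc₁ : 0 < c₁)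
    (hc₃ : c₃ < 1) (h : 1 - B < c₂ / 2 - (1 - c₃)) :
    (1 - B * c₃) * ((1 - c₂) * c₁) < B * c₁ * (B - B ^ 2 * c₃ - (1 - c₃) * c₂) := by
  have hfactor : (1 - B * c₃) * ((1 - c₂) * c₁) - B * c₁ * (B - B ^ 2 * c₃ - (1 - c₃) * c₂)
      = c₁ * (1 - B) * ((1 + B) * (1 - B + B * (1 - c₃)) - c₂) := by ring
  have hneg : (1 + B) * (1 - B + B * (1 - c₃)) - c₂ < 0 := by
    nlinarith [mul_pos (sub_pos.2 hB1) (sub_pos.2 hc₃)]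
  nlinarith [mul_pos hc₁ (sub_pos.2 hB1)]

theorem stmt17_general (s c a : ℕ → ℝ)
    (hs : ∀ n, 1 ≤ n → s n ∈ Set.Ioo (0 : ℝ) 1)
    (h2 : ∀ n, 3 ≤ n → s n ≤ s (n - 2) / 2 - 2 * s (n - 1))
    (hcodd : ∀ n, 1 ≤ n → Odd n → c n = 1 - s n)
    (hceven : ∀ n, 1 ≤ n → Even n → c n = s n)
    (ha : ∀ n, a n = 1 - c n) :
    ∀ N n : ℕ, 3 ≤ N → 1 ≤ n → n ≤ N - 2 →
      (1 - a (2 * N) * c (2 * N - 1) * c (2 * n + 3)) * (a (2 * n + 2) * c (2 * n + 1)) <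
        a (2 * N) * c (2 * N - 1) * c (2 * n + 1) *
          (a (2 * N) * c (2 * N - 1) - (a (2 * N) * c (2 * N - 1)) ^ 2 * c (2 * n + 3)
            - a (2 * n + 3) * c (2 * n + 2)) := by
  intro N n hN hn hnN
  have hpairs : s (2 * N - 1) + s (2 * N) ≤ s (2 * n + 3) + s (2 * n + 4) := by
    have := pair_sum_antitoneOn (fun m hm => (hs m hm).1.le) h2
      (show 1 ≤ 2 * n + 3 by omega) (show 1 ≤ 2 * N - 1 by omega) (by omega)
    simpa only [show 2 * N - 1 + 1 = 2 * N by omega] using this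
  have hhalf := pair_sum_le_half_sub h2 (show 1 ≤ 2 * n + 2 by omega)
  simp only [ha]
  rw [hceven (2 * N) (by omega) ⟨N, by omega⟩, hcodd (2 * N - 1) (by omega) ⟨N - 1, by omega⟩,
    hcodd (2 * n + 1) (by omega) ⟨n, rfl⟩, hceven (2 * n + 2) (by omega) ⟨n + 1, by omega⟩,
    hcodd (2 * n + 3) (by omega) ⟨n + 1, by omega⟩]
  obtain ⟨hp, hp'⟩ := hs (2 * N) (by omega)
  obtain ⟨hq, hq'⟩ := hs (2 * N - 1) (by omega)
  refine mul_sub_lt_of_one_sub_lt (by nlinarith) (by nlinarith)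
    (by linarith [(hs (2 * n + 1) (by omega)).2]) (by linarith [(hs (2 * n + 3) (by omega)).1]) ?_
  nlinarith [mul_pos hp hq]

theorem stmt17 (s c a : ℕ → ℝ)
    (hs : ∀ n, 1 ≤ n → s n ∈ Set.Ioo (0 : ℝ) 1)
    (h1 : s 2 < 1 - s 1 / (1 - s 1))
    (h2 : ∀ n, 3 ≤ n → s n ≤ s (n - 2) / 2 - 2 * s (n - 1))
    (hcodd : ∀ n, 1 ≤ n → Odd n → c n = 1 - s n)
    (hceven : ∀ n, 1 ≤ n → Even n → c n = s n)
    (ha : ∀ n, a n = 1 - c n) :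
    ∀ N n : ℕ, 3 ≤ N → 1 ≤ n → n ≤ N - 2 →
      (1 - a (2 * N) * c (2 * N - 1) * c (2 * n + 3)) * (a (2 * n + 2) * c (2 * n + 1)) <
        a (2 * N) * c (2 * N - 1) * c (2 * n + 1) *
          (a (2 * N) * c (2 * N - 1) - (a (2 * N) * c (2 * N - 1)) ^ 2 * c (2 * n + 3)
            - a (2 * n + 3) * c (2 * n + 2)) :=
  stmt17_general s c a hs h2 hcodd hceven ha
end

section
/- Let (s_n)_{n≥1} ⊆ (0,1) satisfy s_2 < 1 - s_1/(1 - s_1) and s_n ≤ s_{n-2}/2 - 2·s_{n-1} for all n ≥ 3, and define c_n := 1 - s_n for n odd and c_n := s_n for n even, with a_n := 1 - c_n. Then for every N ≥ 3 and every n with 1 ≤ n ≤ N-2, one has a_{2n+2}·c_{2n+1} < (a_{2N}·c_{2N-1})²·c_{2n+1}. -/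
/-!
Positivity of `s (k + 1)` in the recurrence gives `s k < s (k - 1) / 4` for `k ≥ 2`, so `s` is
strictly decreasing from index `1` on. Hence `x := s (2N) < y := s (2N - 1) ≤ s (2n + 3) < t / 4`
with `t := s (2n + 2)`, and after cancelling `c (2n + 1) > 0` the claim reduces to
`1 - t < ((1 - x) (1 - y))²`, which holds since the right side is at least `1 - 2 (x + y) > 1 - t`.
-/

section Recurrence

variable {s : ℕ → ℝ}

theorem lt_div_four_of_recurrence (hpos : ∀ n, 1 ≤ n → 0 < s n)
    (hrec : ∀ n, 3 ≤ n → s n ≤ s (n - 2) / 2 - 2 * s (n - 1)) {k : ℕ} (hk : 2 ≤ k) :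
    s k < s (k - 1) / 4 := by
  have hnext := hrec (k + 1) (by omega)
  rw [show k + 1 - 2 = k - 1 by omega, Nat.add_sub_cancel] at hnext
  linarith [hpos (k + 1) (by omega)]

theorem strictAntiOn_Ici_one_of_recurrence (hpos : ∀ n, 1 ≤ n → 0 < s n)
    (hrec : ∀ n, 3 ≤ n → s n ≤ s (n - 2) / 2 - 2 * s (n - 1)) : StrictAntiOn s (Set.Ici 1) :=
  strictAntiOn_Ici_of_lt_pred fun m hm => by
    rw [Order.pred_eq_sub_one]
    linarith [lt_div_four_of_recurrence hpos hrec hm, hpos (m - 1) (by omega)]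

end Recurrence

theorem one_sub_lt_sq_mul_one_sub {x y t : ℝ} (hx : 0 ≤ x) (hy : 0 ≤ y) (h : 2 * (x + y) < t) :
    1 - t < ((1 - x) * (1 - y)) ^ 2 := by
  rcases le_or_gt (x + y) 1 with hxy | hxy
  · have hprod : 1 - (x + y) ≤ (1 - x) * (1 - y) := by nlinarith [mul_nonneg hx hy]
    calc 1 - t < 1 - 2 * (x + y) := by linarith
      _ ≤ (1 - (x + y)) ^ 2 := by nlinarith
      _ ≤ ((1 - x) * (1 - y)) ^ 2 := pow_le_pow_left₀ (by linarith) hprod 2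
  · linarith [sq_nonneg ((1 - x) * (1 - y))]

theorem stmt18_general (s c a : ℕ → ℝ)
    (hs : ∀ n, 1 ≤ n → s n ∈ Set.Ioo (0 : ℝ) 1)
    (h2 : ∀ n, 3 ≤ n → s n ≤ s (n - 2) / 2 - 2 * s (n - 1))
    (hcodd : ∀ n, 1 ≤ n → Odd n → c n = 1 - s n)
    (hceven : ∀ n, 1 ≤ n → Even n → c n = s n)
    (ha : ∀ n, a n = 1 - c n) :
    ∀ N n : ℕ, 3 ≤ N → 1 ≤ n → n ≤ N - 2 →
      a (2 * n + 2) * c (2 * n + 1) < (a (2 * N) * c (2 * N - 1)) ^ 2 * c (2 * n + 1) := by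
  intro N n hN hn hnN
  have hpos : ∀ n, 1 ≤ n → 0 < s n := fun n hn => (hs n hn).1
  have hanti := strictAntiOn_Ici_one_of_recurrence hpos h2
  have hx : s (2 * N) < s (2 * N - 1) :=
    hanti (Set.mem_Ici.2 (by omega)) (Set.mem_Ici.2 (by omega)) (by omega)
  have hy : s (2 * N - 1) < s (2 * n + 2) / 4 :=
    (hanti.antitoneOn (Set.mem_Ici.2 (by omega)) (Set.mem_Ici.2 (by omega))
      (show 2 * n + 3 ≤ 2 * N - 1 by omega)).trans_lt
      (lt_div_four_of_recurrence hpos h2 (k := 2 * n + 3) (by omega))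
  rw [ha, ha, hceven (2 * n + 2) (by omega) ⟨n + 1, by ring⟩,
    hceven (2 * N) (by omega) ⟨N, by ring⟩, hcodd (2 * n + 1) (by omega) ⟨n, by ring⟩,
    hcodd (2 * N - 1) (by omega) ⟨N - 1, by omega⟩]
  refine mul_lt_mul_of_pos_right (one_sub_lt_sq_mul_one_sub (hpos (2 * N) (by omega)).le
    (hpos (2 * N - 1) (by omega)).le ?_) (sub_pos.2 (hs (2 * n + 1) (by omega)).2)
  linarith

theorem stmt18 (s c a : ℕ → ℝ)
    (hs : ∀ n, 1 ≤ n → s n ∈ Set.Ioo (0 : ℝ) 1)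
    (h1 : s 2 < 1 - s 1 / (1 - s 1))
    (h2 : ∀ n, 3 ≤ n → s n ≤ s (n - 2) / 2 - 2 * s (n - 1))
    (hcodd : ∀ n, 1 ≤ n → Odd n → c n = 1 - s n)
    (hceven : ∀ n, 1 ≤ n → Even n → c n = s n)
    (ha : ∀ n, a n = 1 - c n) :
    ∀ N n : ℕ, 3 ≤ N → 1 ≤ n → n ≤ N - 2 →
      a (2 * n + 2) * c (2 * n + 1) < (a (2 * N) * c (2 * N - 1)) ^ 2 * c (2 * n + 1) :=
  stmt18_general s c a hs h2 hcodd hceven ha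
end

section
/- Let (s_n)_{n≥1} ⊆ (0,1) satisfy s_2 < 1 - s_1/(1 - s_1) and s_n ≤ s_{n-2}/2 - 2·s_{n-1} for all n ≥ 3, and define c_n := 1 - s_n for n odd and c_n := s_n for n even, with a_n := 1 - c_n and α_1 := √c_1, α_n := √(c_n·a_{n-1}) for n ≥ 2. Then for every N ≥ 1 there exist positive reals t_1, ..., t_{2N+1} with t_1 = α_{2N+1} and t_{n+1} = α_{2N+1} - α_n²/t_n for all 1 ≤ n ≤ 2N; equivalently, the (2N+1)×(2N+1) real symmetric tridiagonal matrix with all diagonal entries equal to α_{2N+1} and off-diagonal entries α_1, α_2, ..., α_{2N} is positive definite. -/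
noncomputable def tRec (α : ℕ → ℝ) (D : ℝ) : ℕ → ℝ
  | 0 => D
  | n + 1 => D - α (n + 1) ^ 2 / tRec α D n



lemma tri_quad (d : ℝ) (al : ℕ → ℝ) (x : ℕ → ℝ) :
    ∀ n, (∑ i ∈ Finset.range n, ∑ j ∈ Finset.range n,
        x i * ((if i = j then d else if i + 1 = j ∨ j + 1 = i then al (max i j) else 0) * x j))
      = (∑ i ∈ Finset.range n, d * x i ^ 2)
        + ∑ i ∈ Finset.range (n - 1), 2 * al (i + 1) * x i * x (i + 1) := by
  set g : ℕ → ℕ → ℝ := fun i j =>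
    x i * ((if i = j then d else if i + 1 = j ∨ j + 1 = i then al (max i j) else 0) * x j)
    with hg
  intro n
  induction n with
  | zero => simp
  | succ n ih =>
    have hrow : (∑ j ∈ Finset.range n, g n j)
        = if n = 0 then 0 else al n * x n * x (n - 1) := by
      rcases n with _ | m
      · simp
      · rw [if_neg (Nat.succ_ne_zero m)]
        rw [Finset.sum_eq_single m]
        · have hmax : (m + 1) ⊔ m = m + 1 := sup_eq_left.mpr (Nat.le_succ m)
          simp only [hg, hmax, Nat.add_sub_cancel]
          norm_num
          try ring
        · intro j hj hne
          have hj' : j < m + 1 := Finset.mem_range.mp hj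
          simp only [hg]
          rw [if_neg (by omega), if_neg (by omega)]
          ring
        · intro h
          exact (h (Finset.self_mem_range_succ m)).elim
    have hcol : (∑ i ∈ Finset.range n, g i n)
        = if n = 0 then 0 else al n * x (n - 1) * x n := by
      rcases n with _ | m
      · simp
      · rw [if_neg (Nat.succ_ne_zero m)]
        rw [Finset.sum_eq_single m]
        · have hmax : m ⊔ (m + 1) = m + 1 := sup_eq_right.mpr (Nat.le_succ m)
          simp only [hg, hmax, Nat.add_sub_cancel]
          norm_num
          try ring
        · intro j hj hne
          have hj' : j < m + 1 := Finset.mem_range.mp hj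
          simp only [hg]
          rw [if_neg (by omega), if_neg (by omega)]
          ring
        · intro h
          exact (h (Finset.self_mem_range_succ m)).elim
    have hdiag : g n n = d * x n ^ 2 := by
      simp only [hg]
      norm_num
      try ring
    have expand : (∑ i ∈ Finset.range (n + 1), ∑ j ∈ Finset.range (n + 1), g i j)
        = (∑ i ∈ Finset.range n, ∑ j ∈ Finset.range n, g i j)
          + (∑ i ∈ Finset.range n, g i n) + ((∑ j ∈ Finset.range n, g n j) + g n n) := by
      simp only [Finset.sum_range_succ, Finset.sum_add_distrib]
      ring
    rw [expand, ih, hrow, hcol, hdiag]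
    rcases n with _ | m
    · simp
    · simp only [if_neg (Nat.succ_ne_zero m), Nat.add_sub_cancel, Finset.sum_range_succ]
      ring

lemma sos_identity (d : ℝ) (a t x : ℕ → ℝ) :
    ∀ m, (∀ i, 1 ≤ i → i ≤ m → t i = d - a i ^ 2 / t (i - 1)) → (∀ i, i ≤ m → t i ≠ 0) →
      t 0 = d →
      (∑ i ∈ Finset.range (m + 1), d * x i ^ 2)
        + ∑ i ∈ Finset.range m, 2 * a (i + 1) * x i * x (i + 1)
      = (∑ i ∈ Finset.range m, t i * (x i + a (i + 1) / t i * x (i + 1)) ^ 2)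
        + t m * x m ^ 2 := by
  intro m
  induction m with
  | zero => intro _ _ h0; simp [h0]
  | succ m ih =>
    intro hrec hne h0
    have ih' := ih (fun i h1 h2 => hrec i h1 (h2.trans (Nat.le_succ m)))
      (fun i h => hne i (h.trans (Nat.le_succ m))) h0
    have htm : t m ≠ 0 := hne m (Nat.le_succ m)
    have hrm : t (m + 1) = d - a (m + 1) ^ 2 / t m := by
      have := hrec (m + 1) (by omega) le_rfl
      simpa using this
    have key : d * x (m + 1) ^ 2 + 2 * a (m + 1) * x m * x (m + 1) + t m * x m ^ 2
        = t m * (x m + a (m + 1) / t m * x (m + 1)) ^ 2 + t (m + 1) * x (m + 1) ^ 2 := by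
      rw [hrm]; field_simp; ring
    rw [Finset.sum_range_succ (f := fun i => d * x i ^ 2), Finset.sum_range_succ
      (f := fun i => 2 * a (i + 1) * x i * x (i + 1)), Finset.sum_range_succ
      (f := fun i => t i * (x i + a (i + 1) / t i * x (i + 1)) ^ 2)]
    linarith [ih', key]

lemma sos_pos (d : ℝ) (a t x : ℕ → ℝ) (m : ℕ)
    (hrec : ∀ i, 1 ≤ i → i ≤ m → t i = d - a i ^ 2 / t (i - 1))
    (htpos : ∀ i, i ≤ m → 0 < t i) (h0 : t 0 = d)
    (hx : ∃ i, i ≤ m ∧ x i ≠ 0) :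
    0 < (∑ i ∈ Finset.range (m + 1), d * x i ^ 2)
      + ∑ i ∈ Finset.range m, 2 * a (i + 1) * x i * x (i + 1) := by
  rw [sos_identity d a t x m hrec (fun i h => (htpos i h).ne') h0]
  by_contra hle
  push_neg at hle
  have hterm : ∀ i ∈ Finset.range m, 0 ≤ t i * (x i + a (i + 1) / t i * x (i + 1)) ^ 2 := by
    intro i hi
    exact mul_nonneg (htpos i (Finset.mem_range.mp hi).le).le (sq_nonneg _)
  have hS : 0 ≤ ∑ i ∈ Finset.range m, t i * (x i + a (i + 1) / t i * x (i + 1)) ^ 2 :=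
    Finset.sum_nonneg hterm
  have hlast : 0 ≤ t m * x m ^ 2 := mul_nonneg (htpos m le_rfl).le (sq_nonneg _)
  have hS0 : ∑ i ∈ Finset.range m, t i * (x i + a (i + 1) / t i * x (i + 1)) ^ 2 = 0 :=
    le_antisymm (by linarith) hS
  have hlast0 : t m * x m ^ 2 = 0 := by linarith
  have hxm : x m = 0 := by
    rcases mul_eq_zero.mp hlast0 with h | h
    · exact absurd h (htpos m le_rfl).ne'
    · exact pow_eq_zero_iff (by norm_num) |>.mp h
  have hzero := (Finset.sum_eq_zero_iff_of_nonneg hterm).mp hS0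
  have hstep : ∀ i, i < m → x (i + 1) = 0 → x i = 0 := by
    intro i him hnext
    have h := hzero i (Finset.mem_range.mpr him)
    rcases mul_eq_zero.mp h with h' | h'
    · exact absurd h' (htpos i him.le).ne'
    · have := pow_eq_zero_iff (n := 2) (by norm_num) |>.mp h'
      rw [hnext, mul_zero, add_zero] at this
      exact this
  have hall : ∀ j i, i + j = m → x i = 0 := by
    intro j
    induction j with
    | zero => intro i h; rw [Nat.add_zero] at h; rw [h]; exact hxm
    | succ j ihj =>
      intro i h
      exact hstep i (by omega) (ihj (i + 1) (by omega))
  obtain ⟨i0, hi0, hxi⟩ := hx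
  exact hxi (hall (m - i0) i0 (by omega))


lemma ineq_M (a b σ : ℝ) (ha0 : 0 ≤ a) (ha4 : a < 1/4) (hb : 0 < b)
    (hσ0 : 0 ≤ σ) (hσb : 16 * σ ≤ 5 * b) :
    0 < (1 - σ) * (1 - a - σ) - (1 - a) * (1 - b) := by
  nlinarith [mul_nonneg hσ0 ha0, sq_nonneg σ, mul_lt_mul_of_pos_right ha4 hb]

lemma ineq_core (a b c σ : ℝ) (ha0 : 0 ≤ a) (ha4 : a < 1/4) (hb : 0 < b) (hc : 0 < c)
    (hc4 : 4 * c < b) (hσ0 : 0 ≤ σ) (hσc : 64 * σ ≤ 5 * c) :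
    c * b * (1 - a - σ) ≤ (c + σ) * ((1 - σ) * (1 - a - σ) - (1 - a) * (1 - b)) := by
  have hbsc : (0:ℝ) ≤ b - σ - c := by linarith
  have h34 : (3:ℝ)/4 ≤ 1 - a := by linarith
  have hG : 0 ≤ (1 - a) * (b - σ - c) + b * c - c * (1 - σ) - σ * (1 - σ) := by
    nlinarith [mul_le_mul_of_nonneg_right h34 hbsc, mul_nonneg hb.le hc.le,
      mul_nonneg hc.le hσ0, mul_nonneg hσ0 hσ0]
  nlinarith [mul_nonneg hσ0 hG]

lemma ineq_fin (a b c σ : ℝ) (ha0 : 0 ≤ a) (ha4 : a < 1/4) (hb : 0 < b) (hb16 : b < 1/16)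
    (hc : 0 < c) (hc4 : 4 * c < b) (hσ0 : 0 ≤ σ) (hσc : 4 * σ ≤ 5 * c) :
    c * b * (1 - a - σ) < (1 - σ) * (1 - a - σ) - (1 - a) * (1 - b) := by
  nlinarith [mul_nonneg hσ0 ha0, sq_nonneg σ, mul_lt_mul_of_pos_right ha4 hb,
    mul_nonneg (mul_nonneg hc.le hb.le) (by linarith : (0:ℝ) ≤ a + σ),
    mul_lt_mul_of_pos_right (show c < b/4 by linarith) hb,
    mul_lt_mul_of_pos_right hb16 hb]

set_option maxHeartbeats 4000000 in
theorem stmt19 (s c α : ℕ → ℝ)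
    (hs : ∀ n, 1 ≤ n → s n ∈ Set.Ioo (0 : ℝ) 1)
    (h1 : s 2 < 1 - s 1 / (1 - s 1))
    (h2 : ∀ n, 3 ≤ n → s n ≤ s (n - 2) / 2 - 2 * s (n - 1))
    (hcodd : ∀ n, 1 ≤ n → Odd n → c n = 1 - s n)
    (hceven : ∀ n, 1 ≤ n → Even n → c n = s n)
    (hα1 : α 1 = Real.sqrt (c 1))
    (hα : ∀ n, 2 ≤ n → α n = Real.sqrt (c n * (1 - c (n - 1)))) :
    ∀ N : ℕ, 1 ≤ N →
      (∃ t : ℕ → ℝ,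
          (∀ n, 1 ≤ n → n ≤ 2 * N + 1 → 0 < t n) ∧
          t 1 = α (2 * N + 1) ∧
          ∀ n, 1 ≤ n → n ≤ 2 * N → t (n + 1) = α (2 * N + 1) - (α n) ^ 2 / t n) ∧
      Matrix.PosDef (Matrix.of fun i j : Fin (2 * N + 1) =>
        if i = j then α (2 * N + 1)
        else if (i : ℕ) + 1 = (j : ℕ) ∨ (j : ℕ) + 1 = (i : ℕ) then α (max (i : ℕ) (j : ℕ))
        else 0) := by
  have hspos : ∀ n, 1 ≤ n → 0 < s n := fun n hn => (hs n hn).1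
  have hslt1 : ∀ n, 1 ≤ n → s n < 1 := fun n hn => (hs n hn).2
  have hq : ∀ m, 2 ≤ m → 4 * s m < s (m - 1) := by
    intro m hm
    have h3 := h2 (m + 1) (by omega)
    have hp := hspos (m + 1) (by omega)
    have e1 : m + 1 - 2 = m - 1 := by omega
    have e2 : m + 1 - 1 = m := by omega
    rw [e1, e2] at h3
    linarith
  have hdec : ∀ m, 1 ≤ m → s (m + 1) < s m := by
    intro m hm
    have h := hq (m + 1) (by omega)
    rw [Nat.add_sub_cancel] at h
    have hp := hspos (m + 1) (by omega)
    linarith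
  have hmono : ∀ i j, 1 ≤ i → i ≤ j → s j ≤ s i := by
    intro i j hi hij
    induction j, hij using Nat.le_induction with
    | base => exact le_rfl
    | succ n hn ih => exact ((hdec n (hi.trans hn)).le).trans ih
  have hs21 : 4 * s 2 < s 1 := by
    have h := hq 2 le_rfl; norm_num at h; exact h
  have hs14 : ∀ m, 2 ≤ m → s m < 1 / 4 := by
    intro m hm
    have h := hmono 2 m (by omega) hm
    have h1' := hslt1 1 (by omega)
    linarith
  have hc01 : ∀ m, 1 ≤ m → 0 < c m ∧ c m < 1 := by
    intro m hm
    rcases Nat.even_or_odd m with he | ho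
    · rw [hceven m hm he]; exact ⟨hspos m hm, hslt1 m hm⟩
    · rw [hcodd m hm ho]
      exact ⟨by linarith [hslt1 m hm], by linarith [hspos m hm]⟩
  have hαsq : ∀ n, 2 ≤ n → α n ^ 2 = c n * (1 - c (n - 1)) := by
    intro n hn
    rw [hα n hn]
    exact Real.sq_sqrt (mul_nonneg (hc01 n (by omega)).1.le
      (by linarith [(hc01 (n - 1) (by omega)).2]))
  have hα1sq : α 1 ^ 2 = 1 - s 1 := by
    rw [hα1, hcodd 1 le_rfl odd_one]
    exact Real.sq_sqrt (by linarith [hslt1 1 le_rfl])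
  have heven_sq : ∀ k, 1 ≤ k → α (2 * k) ^ 2 = s (2 * k) * s (2 * k - 1) := by
    intro k hk
    rw [hαsq (2 * k) (by omega), hceven (2 * k) (by omega) (Nat.even_iff.mpr (by omega)),
      hcodd (2 * k - 1) (by omega) (Nat.odd_iff.mpr (by omega))]
    ring
  have hodd_sq : ∀ k, 1 ≤ k → α (2 * k + 1) ^ 2 = (1 - s (2 * k + 1)) * (1 - s (2 * k)) := by
    intro k hk
    have e : 2 * k + 1 - 1 = 2 * k := by omega
    rw [hαsq (2 * k + 1) (by omega), hcodd (2 * k + 1) (by omega) (Nat.odd_iff.mpr (by omega)),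
      e, hceven (2 * k) (by omega) (Nat.even_iff.mpr (by omega))]
  intro N hN
  set D := α (2 * N + 1) with hDdef
  have hD2 : D ^ 2 = (1 - s (2 * N + 1)) * (1 - s (2 * N)) := hodd_sq N hN
  have hD0 : 0 ≤ D := by
    rw [hDdef, hα (2 * N + 1) (by omega)]; exact Real.sqrt_nonneg _
  have hD2pos : 0 < D ^ 2 := by
    rw [hD2]
    exact mul_pos (by linarith [hslt1 (2 * N + 1) (by omega)])
      (by linarith [hslt1 (2 * N) (by omega)])
  have hD : 0 < D := lt_of_le_of_ne hD0 (fun h => by rw [← h] at hD2pos; simp at hD2pos)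
  set σ := 1 - D ^ 2 with hσdef
  have hσeq : σ = s (2 * N) + s (2 * N + 1) - s (2 * N) * s (2 * N + 1) := by
    rw [hσdef, hD2]; ring
  have hσpos : 0 < σ := by
    rw [hσeq]
    nlinarith [hspos (2 * N) (by omega), hspos (2 * N + 1) (by omega),
      hslt1 (2 * N) (by omega), hslt1 (2 * N + 1) (by omega)]
  have hσle : ∀ j, 1 ≤ j → 2 * j ≤ 2 * N → σ ≤ s (2 * j) + s (2 * j + 1) := by
    intro j hj hjN
    have m1 := hmono (2 * j) (2 * N) (by omega) (by omega)
    have m2 := hmono (2 * j + 1) (2 * N + 1) (by omega) (by omega)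
    have hp := mul_nonneg (hspos (2 * N) (by omega)).le (hspos (2 * N + 1) (by omega)).le
    rw [hσeq]; linarith
  have hT0 : tRec α D 0 = D := rfl
  have hTsucc : ∀ n, tRec α D (n + 1) = D - α (n + 1) ^ 2 / tRec α D n := fun n => rfl
  have hσ23 : σ ≤ s 2 + s 3 := by
    have h := hσle 1 (by omega) (by omega); norm_num at h; exact h
  have h23 : s 3 ≤ s 1 / 2 - 2 * s 2 := by
    have h := h2 3 (by omega); norm_num at h; exact h
  have e1 : tRec α D 1 = (s 1 - σ) / D := by
    rw [hTsucc 0, hT0, hα1sq, hσdef]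
    field_simp
    ring
  have hs1σ : 0 < s 1 - σ := by
    linarith [hspos 2 (by omega), hspos 1 (by omega)]
  have ht1pos : 0 < tRec α D 1 := by
    rw [e1]; exact div_pos hs1σ hD
  have hα2sq : α 2 ^ 2 = s 2 * s 1 := by
    have h := heven_sq 1 le_rfl; norm_num at h; exact h
  have e2 : tRec α D 2 = D - D * (s 1 * s 2) / (s 1 - σ) := by
    rw [hTsucc 1, e1, hα2sq, div_div_eq_mul_div]
    ring
  have hfracle : s 1 * s 2 / (s 1 - σ) ≤ s 2 + σ := by
    rw [div_le_iff₀ hs1σ]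
    nlinarith [mul_nonneg hσpos.le (show (0:ℝ) ≤ s 1 - s 2 - σ by
      linarith [hspos 1 (by omega)])]
  have ht2low : D * (1 - s 2 - σ) ≤ tRec α D 2 := by
    rw [e2, mul_div_assoc]
    nlinarith [mul_le_mul_of_nonneg_left hfracle hD0]
  have ht2pos : 0 < tRec α D 2 := by
    have hlt : s 1 * s 2 / (s 1 - σ) < 1 := by
      rw [div_lt_one hs1σ]
      nlinarith [mul_lt_mul_of_pos_left (hs14 2 le_rfl) (hspos 1 (by omega)),
        hspos 2 (by omega), hspos 1 (by omega)]
    rw [e2, mul_div_assoc]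
    nlinarith [mul_pos hD (sub_pos.mpr hlt)]
  -- key invariant induction
  have key : ∀ k, 1 ≤ k → k + 1 ≤ N →
      0 < tRec α D (2 * k - 1) ∧ D * (1 - s (2 * k) - σ) ≤ tRec α D (2 * k) := by
    intro k hk
    induction k, hk using Nat.le_induction with
    | base =>
      intro hN2
      refine ⟨by norm_num; exact ht1pos, by norm_num; exact ht2low⟩
    | succ k hk ih =>
      intro hkN
      obtain ⟨hoddp, heven⟩ := ih (by omega)
      have hb4 : 4 * s (2 * k + 1) < s (2 * k) := by
        have h := hq (2 * k + 1) (by omega)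
        have e : 2 * k + 1 - 1 = 2 * k := by omega
        rwa [e] at h
      have hc4 : 4 * s (2 * k + 2) < s (2 * k + 1) := by
        have h := hq (2 * k + 2) (by omega)
        have e : 2 * k + 2 - 1 = 2 * k + 1 := by omega
        rwa [e] at h
      have hd4 : 4 * s (2 * k + 3) < s (2 * k + 2) := by
        have h := hq (2 * k + 3) (by omega)
        have e : 2 * k + 3 - 1 = 2 * k + 2 := by omega
        rwa [e] at h
      have he4 : 4 * s (2 * k + 4) < s (2 * k + 3) := by
        have h := hq (2 * k + 4) (by omega)
        have e : 2 * k + 4 - 1 = 2 * k + 3 := by omega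
        rwa [e] at h
      have hf4 : 4 * s (2 * k + 5) < s (2 * k + 4) := by
        have h := hq (2 * k + 5) (by omega)
        have e : 2 * k + 5 - 1 = 2 * k + 4 := by omega
        rwa [e] at h
      have hσc : σ ≤ 5 / 64 * s (2 * k + 2) := by
        have h := hσle (k + 2) (by omega) (by omega)
        have e : 2 * (k + 2) = 2 * k + 4 := by ring
        rw [e] at h
        norm_num at h
        linarith [he4, hf4, hd4, hspos (2 * k + 5) (by omega)]
      have hbpos := hspos (2 * k + 1) (by omega)
      have hcpos := hspos (2 * k + 2) (by omega)
      have hapos := hspos (2 * k) (by omega)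
      have ha4 : s (2 * k) < 1 / 4 := hs14 (2 * k) (by omega)
      have hu : 0 < 1 - s (2 * k) - σ := by linarith
      have hDu : 0 < D * (1 - s (2 * k) - σ) := mul_pos hD hu
      have htk : 0 < tRec α D (2 * k) := lt_of_lt_of_le hDu heven
      have hD2σ : D ^ 2 = 1 - σ := by rw [hσdef]; ring
      have hM : 0 < D ^ 2 * (1 - s (2 * k) - σ) - (1 - s (2 * k)) * (1 - s (2 * k + 1)) := by
        rw [hD2σ]
        exact ineq_M _ _ _ hapos.le ha4 hbpos hσpos.le (by linarith)
      have hαodd : α (2 * k + 1) ^ 2 = (1 - s (2 * k + 1)) * (1 - s (2 * k)) :=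
        hodd_sq k (by omega)
      have hAnn : 0 ≤ (1 - s (2 * k + 1)) * (1 - s (2 * k)) :=
        mul_nonneg (by linarith [hslt1 (2 * k + 1) (by omega)])
          (by linarith [hslt1 (2 * k) (by omega)])
      have hlow1 : (D ^ 2 * (1 - s (2 * k) - σ) - (1 - s (2 * k)) * (1 - s (2 * k + 1)))
          / (D * (1 - s (2 * k) - σ)) ≤ tRec α D (2 * k + 1) := by
        rw [hTsucc (2 * k), hαodd]
        have hdl : (1 - s (2 * k + 1)) * (1 - s (2 * k)) / tRec α D (2 * k)
            ≤ (1 - s (2 * k + 1)) * (1 - s (2 * k)) / (D * (1 - s (2 * k) - σ)) :=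
          div_le_div_of_nonneg_left hAnn hDu heven
        have hrw : D - (1 - s (2 * k + 1)) * (1 - s (2 * k)) / (D * (1 - s (2 * k) - σ))
            = (D ^ 2 * (1 - s (2 * k) - σ) - (1 - s (2 * k)) * (1 - s (2 * k + 1)))
              / (D * (1 - s (2 * k) - σ)) := by
          field_simp
        rw [← hrw]
        linarith [hdl]
      have hlowpos : 0 < (D ^ 2 * (1 - s (2 * k) - σ) - (1 - s (2 * k)) * (1 - s (2 * k + 1)))
          / (D * (1 - s (2 * k) - σ)) := div_pos hM hDu
      have ht2k1pos : 0 < tRec α D (2 * k + 1) := lt_of_lt_of_le hlowpos hlow1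
      have hαev : α (2 * k + 2) ^ 2 = s (2 * k + 2) * s (2 * k + 1) := by
        have h := heven_sq (k + 1) (by omega)
        have e : 2 * (k + 1) = 2 * k + 2 := by ring
        rw [e] at h
        have e2' : 2 * k + 2 - 1 = 2 * k + 1 := by omega
        rwa [e2'] at h
      have hcbnn : 0 ≤ s (2 * k + 2) * s (2 * k + 1) := mul_nonneg hcpos.le hbpos.le
      have hcore : s (2 * k + 2) * s (2 * k + 1) * (1 - s (2 * k) - σ)
          ≤ (s (2 * k + 2) + σ) * ((1 - σ) * (1 - s (2 * k) - σ)
            - (1 - s (2 * k)) * (1 - s (2 * k + 1))) :=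
        ineq_core _ _ _ _ hapos.le ha4 hbpos hcpos hc4 hσpos.le (by linarith)
      have hcoreD : s (2 * k + 2) * s (2 * k + 1) * (D * (1 - s (2 * k) - σ))
          / (D ^ 2 * (1 - s (2 * k) - σ) - (1 - s (2 * k)) * (1 - s (2 * k + 1)))
          ≤ D * (s (2 * k + 2) + σ) := by
        rw [div_le_iff₀ hM]
        calc s (2 * k + 2) * s (2 * k + 1) * (D * (1 - s (2 * k) - σ))
            = D * (s (2 * k + 2) * s (2 * k + 1) * (1 - s (2 * k) - σ)) := by ring
          _ ≤ D * ((s (2 * k + 2) + σ) * ((1 - σ) * (1 - s (2 * k) - σ)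
              - (1 - s (2 * k)) * (1 - s (2 * k + 1)))) :=
              mul_le_mul_of_nonneg_left hcore hD0
          _ = D * (s (2 * k + 2) + σ)
              * (D ^ 2 * (1 - s (2 * k) - σ) - (1 - s (2 * k)) * (1 - s (2 * k + 1))) := by
              rw [hD2σ]; ring
      have hfinal2 : D * (1 - s (2 * k + 2) - σ) ≤ tRec α D (2 * k + 2) := by
        rw [hTsucc (2 * k + 1), hαev]
        have hdl2 : s (2 * k + 2) * s (2 * k + 1) / tRec α D (2 * k + 1)
            ≤ s (2 * k + 2) * s (2 * k + 1)
              / ((D ^ 2 * (1 - s (2 * k) - σ) - (1 - s (2 * k)) * (1 - s (2 * k + 1)))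
                / (D * (1 - s (2 * k) - σ))) :=
          div_le_div_of_nonneg_left hcbnn hlowpos hlow1
        rw [div_div_eq_mul_div] at hdl2
        have h5 : s (2 * k + 2) * s (2 * k + 1) / tRec α D (2 * k + 1)
            ≤ D * (s (2 * k + 2) + σ) := le_trans hdl2 hcoreD
        linarith [h5]
      constructor
      · have e : 2 * (k + 1) - 1 = 2 * k + 1 := by omega
        rw [e]; exact ht2k1pos
      · have e : 2 * (k + 1) = 2 * k + 2 := by ring
        rw [e]; exact hfinal2
  -- final step: positivity at 2N-1 and 2N
  have hfinal : 0 < tRec α D (2 * N - 1) ∧ 0 < tRec α D (2 * N) := by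
    rcases eq_or_lt_of_le hN with hN1 | hN2
    · rw [← hN1]
      norm_num
      exact ⟨ht1pos, ht2pos⟩
    · obtain ⟨p, rfl⟩ : ∃ p, N = p + 2 := ⟨N - 2, by omega⟩
      obtain ⟨hoddp, heven⟩ := key (p + 1) (by omega) (by omega)
      have ep : 2 * (p + 1) = 2 * p + 2 := by ring
      rw [ep] at heven
      -- abbreviations: a = s (2p+2), b = s (2p+3), c = s (2p+4), d = s (2p+5)
      have hb4 : 4 * s (2 * p + 3) < s (2 * p + 2) := by
        have h := hq (2 * p + 3) (by omega)
        have e : 2 * p + 3 - 1 = 2 * p + 2 := by omega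
        rwa [e] at h
      have hc4 : 4 * s (2 * p + 4) < s (2 * p + 3) := by
        have h := hq (2 * p + 4) (by omega)
        have e : 2 * p + 4 - 1 = 2 * p + 3 := by omega
        rwa [e] at h
      have hd4 : 4 * s (2 * p + 5) < s (2 * p + 4) := by
        have h := hq (2 * p + 5) (by omega)
        have e : 2 * p + 5 - 1 = 2 * p + 4 := by omega
        rwa [e] at h
      have hσc : σ ≤ s (2 * p + 4) + s (2 * p + 5) := by
        have h := hσle (p + 2) (by omega) (by omega)
        have e : 2 * (p + 2) = 2 * p + 4 := by ring
        rw [e] at h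
        have e2' : 2 * p + 4 + 1 = 2 * p + 5 := by omega
        rw [e2'] at h
        exact h
      have hbpos := hspos (2 * p + 3) (by omega)
      have hcpos := hspos (2 * p + 4) (by omega)
      have hapos := hspos (2 * p + 2) (by omega)
      have ha4 : s (2 * p + 2) < 1 / 4 := hs14 (2 * p + 2) (by omega)
      have hb16 : s (2 * p + 3) < 1 / 16 := by linarith
      have hu : 0 < 1 - s (2 * p + 2) - σ := by linarith
      have hDu : 0 < D * (1 - s (2 * p + 2) - σ) := mul_pos hD hu
      have hD2σ : D ^ 2 = 1 - σ := by rw [hσdef]; ring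
      have hM : 0 < D ^ 2 * (1 - s (2 * p + 2) - σ)
          - (1 - s (2 * p + 2)) * (1 - s (2 * p + 3)) := by
        rw [hD2σ]
        exact ineq_M _ _ _ hapos.le ha4 hbpos hσpos.le (by linarith)
      have hαodd : α (2 * p + 3) ^ 2 = (1 - s (2 * p + 3)) * (1 - s (2 * p + 2)) := by
        have h := hodd_sq (p + 1) (by omega)
        have e : 2 * (p + 1) + 1 = 2 * p + 3 := by ring
        rw [e] at h
        have e2' : 2 * (p + 1) = 2 * p + 2 := by ring
        rwa [e2'] at h
      have hAnn : 0 ≤ (1 - s (2 * p + 3)) * (1 - s (2 * p + 2)) :=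
        mul_nonneg (by linarith) (by linarith)
      have hrec3 : tRec α D (2 * p + 3) = D - α (2 * p + 3) ^ 2 / tRec α D (2 * p + 2) :=
        hTsucc (2 * p + 2)
      have hlow1 : (D ^ 2 * (1 - s (2 * p + 2) - σ)
            - (1 - s (2 * p + 2)) * (1 - s (2 * p + 3))) / (D * (1 - s (2 * p + 2) - σ))
          ≤ tRec α D (2 * p + 3) := by
        rw [hrec3, hαodd]
        have hdl : (1 - s (2 * p + 3)) * (1 - s (2 * p + 2)) / tRec α D (2 * p + 2)
            ≤ (1 - s (2 * p + 3)) * (1 - s (2 * p + 2)) / (D * (1 - s (2 * p + 2) - σ)) :=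
          div_le_div_of_nonneg_left hAnn hDu heven
        have hrw : D - (1 - s (2 * p + 3)) * (1 - s (2 * p + 2))
              / (D * (1 - s (2 * p + 2) - σ))
            = (D ^ 2 * (1 - s (2 * p + 2) - σ)
              - (1 - s (2 * p + 2)) * (1 - s (2 * p + 3))) / (D * (1 - s (2 * p + 2) - σ)) := by
          field_simp
        rw [← hrw]
        linarith [hdl]
      have hlowpos : 0 < (D ^ 2 * (1 - s (2 * p + 2) - σ)
          - (1 - s (2 * p + 2)) * (1 - s (2 * p + 3))) / (D * (1 - s (2 * p + 2) - σ)) :=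
        div_pos hM hDu
      have ht3pos : 0 < tRec α D (2 * p + 3) := lt_of_lt_of_le hlowpos hlow1
      have hαev : α (2 * p + 4) ^ 2 = s (2 * p + 4) * s (2 * p + 3) := by
        have h := heven_sq (p + 2) (by omega)
        have e : 2 * (p + 2) = 2 * p + 4 := by ring
        rw [e] at h
        have e2' : 2 * p + 4 - 1 = 2 * p + 3 := by omega
        rwa [e2'] at h
      have hcbnn : 0 ≤ s (2 * p + 4) * s (2 * p + 3) := mul_nonneg hcpos.le hbpos.le
      have hrec4 : tRec α D (2 * p + 4) = D - α (2 * p + 4) ^ 2 / tRec α D (2 * p + 3) :=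
        hTsucc (2 * p + 3)
      have hdl2 : s (2 * p + 4) * s (2 * p + 3) / tRec α D (2 * p + 3)
          ≤ s (2 * p + 4) * s (2 * p + 3)
            / ((D ^ 2 * (1 - s (2 * p + 2) - σ)
              - (1 - s (2 * p + 2)) * (1 - s (2 * p + 3))) / (D * (1 - s (2 * p + 2) - σ))) :=
        div_le_div_of_nonneg_left hcbnn hlowpos hlow1
      rw [div_div_eq_mul_div] at hdl2
      have hcore : s (2 * p + 4) * s (2 * p + 3) * (1 - s (2 * p + 2) - σ)
          < (1 - σ) * (1 - s (2 * p + 2) - σ)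
            - (1 - s (2 * p + 2)) * (1 - s (2 * p + 3)) :=
        ineq_fin _ _ _ _ hapos.le ha4 hbpos hb16 hcpos hc4 hσpos.le (by linarith)
      have hfrac : s (2 * p + 4) * s (2 * p + 3) * (D * (1 - s (2 * p + 2) - σ))
          / (D ^ 2 * (1 - s (2 * p + 2) - σ)
            - (1 - s (2 * p + 2)) * (1 - s (2 * p + 3))) < D := by
        rw [div_lt_iff₀ hM]
        have h6 : s (2 * p + 4) * s (2 * p + 3) * (1 - s (2 * p + 2) - σ)
            < D ^ 2 * (1 - s (2 * p + 2) - σ)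
              - (1 - s (2 * p + 2)) * (1 - s (2 * p + 3)) := by
          rw [hD2σ]; exact hcore
        calc s (2 * p + 4) * s (2 * p + 3) * (D * (1 - s (2 * p + 2) - σ))
            = D * (s (2 * p + 4) * s (2 * p + 3) * (1 - s (2 * p + 2) - σ)) := by ring
          _ < D * (D ^ 2 * (1 - s (2 * p + 2) - σ)
              - (1 - s (2 * p + 2)) * (1 - s (2 * p + 3))) := by
              exact mul_lt_mul_of_pos_left h6 hD
      have ht4pos : 0 < tRec α D (2 * p + 4) := by
        rw [hrec4, hαev]
        linarith [le_trans hdl2 hfrac.le, hdl2, hfrac]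
      constructor
      · have e : 2 * (p + 2) - 1 = 2 * p + 3 := by omega
        rw [e]; exact ht3pos
      · have e : 2 * (p + 2) = 2 * p + 4 := by ring
        rw [e]; exact ht4pos
  -- positivity of all pivots
  have hσhalf : σ < 1 / 2 := by
    have h := hσ23
    have := hs14 2 (by omega)
    have := hs14 3 (by omega)
    linarith
  have hallpos : ∀ m, m ≤ 2 * N → 0 < tRec α D m := by
    intro m hm
    rcases Nat.even_or_odd m with he | ho
    · obtain ⟨j, hj⟩ := he
      rcases Nat.eq_zero_or_pos j with rfl | hjpos
      · have e : m = 0 := by omega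
        rw [e]; exact hD
      · have hjN : j ≤ N := by omega
        rcases eq_or_lt_of_le hjN with rfl | hjlt
        · have e : m = 2 * j := by omega
          rw [e]; exact hfinal.2
        · obtain ⟨_, hlow⟩ := key j hjpos (by omega)
          have hupos : 0 < 1 - s (2 * j) - σ := by
            have := hs14 (2 * j) (by omega)
            linarith
          have e : m = 2 * j := by omega
          rw [e]
          exact lt_of_lt_of_le (mul_pos hD hupos) hlow
    · obtain ⟨j, hj⟩ := ho
      have hjN : j + 1 ≤ N := by omega
      rcases eq_or_lt_of_le hjN with heq | hjlt
      · have e : m = 2 * N - 1 := by omega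
        rw [e]; exact hfinal.1
      · obtain ⟨hp, _⟩ := key (j + 1) (by omega) (by omega)
        have e : m = 2 * (j + 1) - 1 := by omega
        rw [e]; exact hp
  -- assemble
  refine ⟨⟨fun n => tRec α D (n - 1), ?_, rfl, ?_⟩, Matrix.PosDef.of_dotProduct_mulVec_pos ?_ ?_⟩
  · intro n h1' h2'
    exact hallpos (n - 1) (by omega)
  · intro n h1' h2'
    obtain ⟨m, rfl⟩ : ∃ m, n = m + 1 := ⟨n - 1, by omega⟩
    show tRec α D (m + 1 + 1 - 1) = D - α (m + 1) ^ 2 / tRec α D (m + 1 - 1)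
    simp only [Nat.add_sub_cancel]
    exact hTsucc m
  · -- Hermitian
    ext i j
    simp only [Matrix.conjTranspose_apply, Matrix.of_apply, star_trivial]
    by_cases h : i = j
    · subst h; rfl
    · rw [if_neg (fun hh => h hh.symm), if_neg h]
      by_cases h2' : (i : ℕ) + 1 = (j : ℕ) ∨ (j : ℕ) + 1 = (i : ℕ)
      · rw [if_pos h2'.symm, if_pos h2', max_comm (j : ℕ) (i : ℕ)]
      · rw [if_neg (fun hh => h2' hh.symm), if_neg h2']
  · -- quadratic form positivity
    intro x hx
    obtain ⟨i0, hi0⟩ : ∃ i0, x i0 ≠ 0 := by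
      by_contra hcon; push_neg at hcon; exact hx (funext hcon)
    set x' : ℕ → ℝ := fun m => if h : m < 2 * N + 1 then x ⟨m, h⟩ else 0 with hx'def
    have hx'coe : ∀ i : Fin (2 * N + 1), x' (i : ℕ) = x i := by
      intro i
      rw [hx'def]
      simp [i.isLt]
    have hentry : ∀ i j : Fin (2 * N + 1),
        (Matrix.of fun i j : Fin (2 * N + 1) =>
          if i = j then D
          else if (i : ℕ) + 1 = (j : ℕ) ∨ (j : ℕ) + 1 = (i : ℕ) then α (max (i : ℕ) (j : ℕ))
          else 0) i j
        = (if (i : ℕ) = (j : ℕ) then D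
          else if (i : ℕ) + 1 = (j : ℕ) ∨ (j : ℕ) + 1 = (i : ℕ) then α (max (i : ℕ) (j : ℕ))
          else 0) := by
      intro i j
      rw [Matrix.of_apply]
      by_cases h : i = j
      · rw [if_pos h, if_pos (congrArg Fin.val h)]
      · rw [if_neg h, if_neg (fun hh => h (Fin.ext hh))]
    have hQ : dotProduct (star x) (Matrix.mulVec (Matrix.of fun i j : Fin (2 * N + 1) =>
          if i = j then D
          else if (i : ℕ) + 1 = (j : ℕ) ∨ (j : ℕ) + 1 = (i : ℕ) then α (max (i : ℕ) (j : ℕ))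
          else 0) x)
        = ∑ i ∈ Finset.range (2 * N + 1), ∑ j ∈ Finset.range (2 * N + 1),
            x' i * ((if i = j then D
              else if i + 1 = j ∨ j + 1 = i then α (max i j) else 0) * x' j) := by
      rw [star_trivial]
      simp only [dotProduct, Matrix.mulVec]
      rw [← Fin.sum_univ_eq_sum_range (fun i => ∑ j ∈ Finset.range (2 * N + 1),
        x' i * ((if i = j then D
          else if i + 1 = j ∨ j + 1 = i then α (max i j) else 0) * x' j)) (2 * N + 1)]
      apply Finset.sum_congr rfl
      intro i _
      rw [← Finset.mul_sum, hx'coe]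
      congr 1
      rw [← Fin.sum_univ_eq_sum_range (fun j => (if (i : ℕ) = j then D
        else if (i : ℕ) + 1 = j ∨ j + 1 = (i : ℕ) then α (max (i : ℕ) j) else 0) * x' j)
        (2 * N + 1)]
      apply Finset.sum_congr rfl
      intro j _
      rw [hx'coe, hentry i j]
    rw [hQ, tri_quad]
    have e : 2 * N + 1 - 1 = 2 * N := by omega
    rw [e]
    refine sos_pos D α (tRec α D) x' (2 * N) ?_ hallpos rfl
      ⟨(i0 : ℕ), by omega, by rw [hx'coe]; exact hi0⟩
    intro i hi1 hi2
    obtain ⟨m, rfl⟩ : ∃ m, i = m + 1 := ⟨i - 1, by omega⟩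
    simp only [Nat.add_sub_cancel]
    exact hTsucc m
end
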